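/- arXiv:2403.11724 — 6 statements merged into one kernel-verified Lean document; each statement's English description precedes it below -/
import Mathlib

section
/- Let λ⁻ < λ⁺ ∈ (-1,1) and n ≥ 2. The set of positive semidefinite Gram matrices G = [XᵀX, XᵀY; YᵀX, YᵀY] (over all dimensions d and X, Y ∈ ℝ^{d×n} with columns x_i, y_i) such that there exists a symmetric matrix W ∈ ℝ^{n×n} with W𝟏 = 𝟏, eigenvalue 1 simple with eigenvector 𝟏/√n, all other eigenvalues in [λ⁻, λ⁺], and Yᵀ = WXᵀ, is not convex. -/
/-!
If the top-left block of a Gram matrix is rank one, `XᵀX = u uᵀ`, and `Y = X Wᵀ`, then the whole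
Gram matrix is rank one: `XᵀY = u (Wu)ᵀ` and `YᵀY = (Wu)(Wu)ᵀ`, so its diagonal satisfies
Cauchy–Schwarz with equality, `(XᵀY)ᵢᵢ² = (XᵀX)ᵢᵢ (YᵀY)ᵢᵢ`. For `u = e₀ - e₁` (so `∑ uᵢ = 0`) and
the averaging matrix `W = a I + (1 - a)/n 𝟏𝟏ᵀ`, which acts as `a` on `𝟏^⊥`, the Gram matrix of
`X = uᵀ`, `Y = a uᵀ` is in the set for every `a ∈ [λ⁻, λ⁺]`. Its midpoint between `a = λ⁻` and
`a = λ⁺` still has top-left block `u uᵀ`, but its `(0,0)` entries give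
`((λ⁻ + λ⁺)/2)² = (λ⁻² + λ⁺²)/2`, forcing `λ⁻ = λ⁺`.
-/

open Matrix

section RankOneGram

variable {R : Type*} [CommRing R] {d ι : Type*} [Fintype d] [Fintype ι]

theorem gram_eq_vecMulVec_of_transpose_eq_mul {X Y : Matrix d ι R} {W : Matrix ι ι R}
    {u : ι → R} (hX : Xᵀ * X = vecMulVec u u) (hY : Yᵀ = W * Xᵀ) :
    Xᵀ * Y = vecMulVec u (W *ᵥ u) ∧ Yᵀ * Y = vecMulVec (W *ᵥ u) (W *ᵥ u) := by
  have hY' : Y = X * Wᵀ := by simpa using congrArg transpose hY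
  have hXY : Xᵀ * Y = vecMulVec u (W *ᵥ u) := by
    rw [hY', ← Matrix.mul_assoc, hX, vecMulVec_mul, vecMul_transpose]
  refine ⟨hXY, ?_⟩
  rw [hY, Matrix.mul_assoc, hXY, mul_vecMulVec]

theorem sq_diag_cross_gram_of_transpose_eq_mul {X Y : Matrix d ι R} {W : Matrix ι ι R}
    {u : ι → R} (hX : Xᵀ * X = vecMulVec u u) (hY : Yᵀ = W * Xᵀ) (i : ι) :
    (Xᵀ * Y) i i ^ 2 = (Xᵀ * X) i i * (Yᵀ * Y) i i := by
  obtain ⟨hXY, hYY⟩ := gram_eq_vecMulVec_of_transpose_eq_mul hX hY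
  rw [hXY, hYY, hX]
  simp only [vecMulVec_apply]
  ring

end RankOneGram

section UniformAveraging

noncomputable def uniformAveraging (ι : Type*) [Fintype ι] [DecidableEq ι] (a : ℝ) : Matrix ι ι ℝ :=
  a • 1 + ((1 - a) / Fintype.card ι) • vecMulVec 1 1

variable {ι : Type*} [Fintype ι] [DecidableEq ι]

theorem isSymm_uniformAveraging (a : ℝ) : (uniformAveraging ι a).IsSymm :=
  (isSymm_one.smul a).add (IsSymm.smul (transpose_vecMulVec 1 1) _)

theorem uniformAveraging_mulVec (a : ℝ) (v : ι → ℝ) :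
    uniformAveraging ι a *ᵥ v = a • v + (((1 - a) / Fintype.card ι) * ∑ i, v i) • 1 := by
  rw [uniformAveraging, add_mulVec, smul_mulVec, smul_mulVec, one_mulVec, vecMulVec_mulVec,
    one_dotProduct, op_smul_eq_smul, smul_smul]

theorem uniformAveraging_mulVec_one [Nonempty ι] (a : ℝ) :
    uniformAveraging ι a *ᵥ 1 = 1 := by
  rw [uniformAveraging_mulVec]
  ext i
  simp

theorem uniformAveraging_mulVec_of_sum_eq_zero (a : ℝ) {v : ι → ℝ} (hv : ∑ i, v i = 0) :
    uniformAveraging ι a *ᵥ v = a • v := by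
  rw [uniformAveraging_mulVec, hv, mul_zero, zero_smul, add_zero]

theorem dotProduct_uniformAveraging_mulVec_of_sum_eq_zero (a : ℝ) {v : ι → ℝ}
    (hv : ∑ i, v i = 0) : v ⬝ᵥ uniformAveraging ι a *ᵥ v = a * (v ⬝ᵥ v) := by
  rw [uniformAveraging_mulVec_of_sum_eq_zero a hv, dotProduct_smul, smul_eq_mul]

end UniformAveraging

def averagingGramSet (ι : Type*) [Fintype ι] (lm lp : ℝ) : Set (Matrix (ι ⊕ ι) (ι ⊕ ι) ℝ) :=
  { G | ∃ (d : ℕ) (X Y : Matrix (Fin d) ι ℝ),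
          G = fromBlocks (Xᵀ * X) (Xᵀ * Y) (Yᵀ * X) (Yᵀ * Y) ∧
          ∃ W : Matrix ι ι ℝ,
            W.IsSymm ∧
            W.mulVec (fun _ => 1) = (fun _ => 1) ∧
            (∀ v : ι → ℝ, (∑ i, v i) = 0 →
              lm * (v ⬝ᵥ v) ≤ v ⬝ᵥ W.mulVec v ∧ v ⬝ᵥ W.mulVec v ≤ lp * (v ⬝ᵥ v)) ∧
            Yᵀ = W * Xᵀ }

theorem fromBlocks_vecMulVec_mem_averagingGramSet {ι : Type*} [Fintype ι] [DecidableEq ι]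
    [Nonempty ι] {lm lp a : ℝ} (ha : a ∈ Set.Icc lm lp) {u : ι → ℝ} (hu : ∑ i, u i = 0) :
    fromBlocks (vecMulVec u u) (vecMulVec u (a • u)) (vecMulVec (a • u) u)
      (vecMulVec (a • u) (a • u)) ∈ averagingGramSet ι lm lp := by
  refine ⟨1, replicateRow (Fin 1) u, replicateRow (Fin 1) (a • u), ?_, uniformAveraging ι a,
    isSymm_uniformAveraging a, uniformAveraging_mulVec_one a, fun v hv => ?_, ?_⟩
  · simp only [transpose_replicateRow, vecMulVec_eq (Fin 1)]
    rfl
  · have hvv : 0 ≤ v ⬝ᵥ v := dotProduct_self_star_nonneg v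
    rw [dotProduct_uniformAveraging_mulVec_of_sum_eq_zero a hv]
    exact ⟨mul_le_mul_of_nonneg_right ha.1 hvv, mul_le_mul_of_nonneg_right ha.2 hvv⟩
  · rw [transpose_replicateRow, transpose_replicateRow, ← replicateCol_mulVec,
      uniformAveraging_mulVec_of_sum_eq_zero a hu]

theorem stmt_2_general (n : ℕ) (hn : 2 ≤ n) (lm lp : ℝ) (hlt : lm < lp) :
    ¬ Convex ℝ { G : Matrix (Fin n ⊕ Fin n) (Fin n ⊕ Fin n) ℝ |
        ∃ (d : ℕ) (X Y : Matrix (Fin d) (Fin n) ℝ),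
          G = Matrix.fromBlocks (Xᵀ * X) (Xᵀ * Y) (Yᵀ * X) (Yᵀ * Y) ∧
          ∃ W : Matrix (Fin n) (Fin n) ℝ,
            W.IsSymm ∧
            W.mulVec (fun _ => 1) = (fun _ => 1) ∧
            (∀ v : Fin n → ℝ, (∑ i, v i) = 0 →
              lm * (v ⬝ᵥ v) ≤ v ⬝ᵥ W.mulVec v ∧ v ⬝ᵥ W.mulVec v ≤ lp * (v ⬝ᵥ v)) ∧
            Yᵀ = W * Xᵀ } := by
  change ¬ Convex ℝ (averagingGramSet (Fin n) lm lp)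
  intro hconv
  have : Nonempty (Fin n) := ⟨⟨0, by omega⟩⟩
  let i₀ : Fin n := ⟨0, by omega⟩
  let i₁ : Fin n := ⟨1, by omega⟩
  have hne : i₀ ≠ i₁ := by simp [i₀, i₁, Fin.ext_iff]
  set u : Fin n → ℝ := Pi.single i₀ 1 - Pi.single i₁ 1
  have hu : ∑ i, u i = 0 := by simp [u, Finset.sum_sub_distrib]
  have hu₀ : u i₀ = 1 := by simp [u, hne]
  obtain ⟨d, X, Y, hG, W, -, -, -, hYX⟩ :=
    hconv (fromBlocks_vecMulVec_mem_averagingGramSet ⟨le_rfl, hlt.le⟩ hu)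
      (fromBlocks_vecMulVec_mem_averagingGramSet ⟨hlt.le, le_rfl⟩ hu)
      (by norm_num : (0 : ℝ) ≤ 1 / 2) (by norm_num : (0 : ℝ) ≤ 1 / 2) (by norm_num)
  simp only [fromBlocks_smul, fromBlocks_add, fromBlocks_inj] at hG
  obtain ⟨hXX, hXY, -, hYY⟩ := hG
  have hrankOne : Xᵀ * X = vecMulVec u u := by rw [← hXX, ← add_smul]; norm_num
  have hcs := sq_diag_cross_gram_of_transpose_eq_mul hrankOne hYX i₀
  rw [← hXX, ← hXY, ← hYY] at hcs
  simp only [one_div, vecMulVec_smul, smul_vecMulVec, Matrix.add_apply, Matrix.smul_apply,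
    vecMulVec_apply, hu₀, mul_one, smul_eq_mul] at hcs
  nlinarith

theorem stmt_2 (n : ℕ) (hn : 2 ≤ n) (lm lp : ℝ) (hlt : lm < lp)
    (hlm : lm ∈ Set.Ioo (-1 : ℝ) 1) (hlp : lp ∈ Set.Ioo (-1 : ℝ) 1) :
    ¬ Convex ℝ { G : Matrix (Fin n ⊕ Fin n) (Fin n ⊕ Fin n) ℝ |
        ∃ (d : ℕ) (X Y : Matrix (Fin d) (Fin n) ℝ),
          G = Matrix.fromBlocks (Xᵀ * X) (Xᵀ * Y) (Yᵀ * X) (Yᵀ * Y) ∧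
          ∃ W : Matrix (Fin n) (Fin n) ℝ,
            W.IsSymm ∧
            W.mulVec (fun _ => 1) = (fun _ => 1) ∧
            (∀ v : Fin n → ℝ, (∑ i, v i) = 0 →
              lm * (v ⬝ᵥ v) ≤ v ⬝ᵥ W.mulVec v ∧ v ⬝ᵥ W.mulVec v ≤ lp * (v ⬝ᵥ v)) ∧
            Yᵀ = W * Xᵀ } :=
  stmt_2_general n hn lm lp hlt
end

section
/- Let S be a subspace of ℝᵐ, λ⁻ ≤ λ⁺ ∈ (-1,1), and X, Y ∈ ℝ^{m×K}. Write X = X̄ + X⊥ and Y = Ȳ + Y⊥ where X̄, Ȳ are the columnwise orthogonal projections onto S and X⊥, Y⊥ onto S^⊥. Then there exists a symmetric matrix M ∈ ℝ^{m×m} whose eigenvalue 1 has multiplicity dim(S) with eigenspace exactly S and all other eigenvalues in [λ⁻, λ⁺], such that Y = MX, if and only if: (i) X̄ = Ȳ, (ii) (Y⊥ − λ⁻X⊥)ᵀ(Y⊥ − λ⁺X⊥) ⪯ 0, and (iii) X⊥ᵀY⊥ = Y⊥ᵀX⊥. -/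
set_option maxHeartbeats 1000000

lemma cs2_aux {qu qv qa qc : ℝ} (hu : 0 ≤ qu) (hv : 0 ≤ qv) (ha : 0 ≤ qa) (hc : 0 ≤ qc)
    (h : qa ^ 2 + qc ^ 2 = qu ^ 2 + qv ^ 2) : qu * qa + qv * qc ≤ qu ^ 2 + qv ^ 2 := by
  nlinarith [sq_nonneg (qu * qc - qv * qa), sq_nonneg (qu - qa), sq_nonneg (qv - qc),
    sq_nonneg (qu * qa + qv * qc)]

lemma tz_aux {t q nz : ℝ} (ht : 0 ≤ t) (hq : 0 ≤ q) (hnz : 0 ≤ nz)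
    (h1 : q ^ 2 ≤ t) (h2 : t ≤ q * nz) : t ≤ nz ^ 2 := by
  nlinarith

lemma le_of_sq_le_sq' {a b : ℝ} (ha : 0 ≤ a) (hb : 0 ≤ b) (h : a ^ 2 ≤ b ^ 2) : a ≤ b := by nlinarith

section Helpers
variable {V : Type*} [NormedAddCommGroup V] [InnerProductSpace ℝ V]
variable {n : ℕ} (b : OrthonormalBasis (Fin n) ℝ V)

noncomputable def opDiag (f : Fin n → ℝ) : V →ₗ[ℝ] V :=
  b.toBasis.constr ℝ (fun i => f i • b i)

lemma opDiag_basis (f : Fin n → ℝ) (i : Fin n) : opDiag b f (b i) = f i • b i := by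
  have := b.toBasis.constr_basis ℝ (fun i => f i • b i) i
  simpa [opDiag] using this

lemma opDiag_apply (f : Fin n → ℝ) (v : V) :
    opDiag b f v = ∑ i, (f i * (inner ℝ (b i) v : ℝ)) • b i := by
  conv_lhs => rw [← b.sum_repr v]
  rw [map_sum]
  refine Finset.sum_congr rfl fun i _ => ?_
  rw [map_smul, opDiag_basis, OrthonormalBasis.repr_apply_apply, smul_smul, mul_comm]

lemma inner_opDiag (f : Fin n → ℝ) (v v' : V) :
    (inner ℝ (opDiag b f v) v' : ℝ) = ∑ i, f i * (inner ℝ (b i) v : ℝ) * (inner ℝ (b i) v' : ℝ) := by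
  rw [opDiag_apply, sum_inner]
  refine Finset.sum_congr rfl fun i _ => ?_
  rw [real_inner_smul_left]

lemma opDiag_symm (f : Fin n → ℝ) (v v' : V) :
    (inner ℝ (opDiag b f v) v' : ℝ) = inner ℝ v (opDiag b f v') := by
  rw [inner_opDiag, real_inner_comm, inner_opDiag]
  exact Finset.sum_congr rfl fun i _ => by ring

lemma opDiag_opDiag (f g : Fin n → ℝ) (v : V) :
    opDiag b f (opDiag b g v) = opDiag b (fun i => f i * g i) v := by
  have : (opDiag b f) ∘ₗ (opDiag b g) = opDiag b (fun i => f i * g i) := by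
    apply b.toBasis.ext
    intro i
    simp [OrthonormalBasis.coe_toBasis, opDiag_basis, smul_smul, mul_comm]
  exact congrArg (fun (L : V →ₗ[ℝ] V) => L v) this

lemma opDiag_one (v : V) : opDiag b (fun _ => 1) v = v := by
  have : opDiag b (fun _ => (1:ℝ)) = LinearMap.id := by
    apply b.toBasis.ext
    intro i
    simp [OrthonormalBasis.coe_toBasis, opDiag_basis]
  rw [this]; rfl

lemma parseval (v v' : V) :
    (inner ℝ v v' : ℝ) = ∑ i, (inner ℝ (b i) v : ℝ) * (inner ℝ (b i) v' : ℝ) := by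
  have := inner_opDiag b (fun _ => 1) v v'
  rw [opDiag_one] at this
  simpa using this

end Helpers

variable {E : Type*} [NormedAddCommGroup E] [InnerProductSpace ℝ E] [FiniteDimensional ℝ E]

lemma core_lemma {K : ℕ} (x w : Fin K → E)
    (ha : ∀ c : Fin K → ℝ, ‖∑ k, c k • w k‖ ≤ ‖∑ k, c k • x k‖)
    (hb : ∀ k l, (inner ℝ (x k) (w l) : ℝ) = (inner ℝ (w k) (x l) : ℝ)) :
    ∃ N : E →ₗ[ℝ] E,
      (∀ u v, (inner ℝ (N u) v : ℝ) = (inner ℝ u (N v) : ℝ)) ∧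
      (∀ z, |(inner ℝ z (N z) : ℝ)| ≤ ‖z‖ ^ 2) ∧
      (∀ k, N (x k) = w k) := by
  classical
  set V : Submodule ℝ E := Submodule.span ℝ (Set.range x) with hV
  -- construct the section σ
  set Φ : (Fin K → ℝ) →ₗ[ℝ] E := ∑ k, (LinearMap.proj k : (Fin K → ℝ) →ₗ[ℝ] ℝ).smulRight (x k) with hΦ
  have hΦ_apply : ∀ c, Φ c = ∑ k, c k • x k := by
    intro c; simp [hΦ, LinearMap.sum_apply]
  have hΦ_mem : ∀ c, Φ c ∈ V := by
    intro c
    rw [hΦ_apply]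
    exact Submodule.sum_mem _ fun k _ =>
      Submodule.smul_mem _ _ (Submodule.subset_span (Set.mem_range_self k))
  set Φ' : (Fin K → ℝ) →ₗ[ℝ] V := Φ.codRestrict V hΦ_mem with hΦ'
  have hΦ'surj : LinearMap.range Φ' = ⊤ := by
    rw [LinearMap.range_eq_top]
    rintro ⟨v, hv⟩
    rw [hV] at hv
    obtain ⟨c, hc⟩ := (Submodule.mem_span_range_iff_exists_fun ℝ).1 hv
    refine ⟨c, Subtype.ext ?_⟩
    show Φ c = v
    rw [hΦ_apply]; exact hc
  obtain ⟨σ, hσ_sec⟩ := Φ'.exists_rightInverse_of_surjective hΦ'surj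
  have hσ : ∀ v : V, ∑ k, σ v k • x k = (v : E) := by
    intro v
    have : Φ' (σ v) = v := by
      have := congrArg (fun (L : V →ₗ[ℝ] V) => L v) hσ_sec
      simpa using this
    have h2 := congrArg (Subtype.val) this
    rw [← hΦ_apply]
    exact h2
  -- the map Ψ and T
  set Ψ : (Fin K → ℝ) →ₗ[ℝ] E := ∑ k, (LinearMap.proj k : (Fin K → ℝ) →ₗ[ℝ] ℝ).smulRight (w k) with hΨ
  have hΨ_apply : ∀ c, Ψ c = ∑ k, c k • w k := by
    intro c; simp [hΨ, LinearMap.sum_apply]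
  set Tw : V →ₗ[ℝ] E := Ψ.comp σ with hTw
  have hTwa : ∀ v : V, Tw v = ∑ k, σ v k • w k := by
    intro v; simp [hTw, hΨ_apply]
  have hT1 : ∀ (v : V) (c : Fin K → ℝ), (v : E) = ∑ k, c k • x k → Tw v = ∑ k, c k • w k := by
    intro v c hc
    have h0 : ∑ k, (σ v k - c k) • x k = 0 := by
      simp only [sub_smul, Finset.sum_sub_distrib]
      rw [hσ v, ← hc, sub_self]
    have h1 := ha (fun k => σ v k - c k)
    rw [h0, norm_zero] at h1
    have h2 : ∑ k, (σ v k - c k) • w k = 0 := norm_le_zero_iff.mp h1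
    simp only [sub_smul, Finset.sum_sub_distrib, sub_eq_zero] at h2
    rw [hTwa v, h2]
  have hT2 : ∀ v : V, ‖Tw v‖ ≤ ‖v‖ := by
    intro v
    rw [hTwa v]
    have := ha (σ v)
    rw [hσ v] at this
    simpa using this
  have expand : ∀ (c c' : Fin K → ℝ) (a e : Fin K → E),
      (inner ℝ (∑ k, c k • a k) (∑ l, c' l • e l) : ℝ)
        = ∑ k, ∑ l, c k * c' l * inner ℝ (a k) (e l) := by
    intro c c' a e
    rw [sum_inner]
    refine Finset.sum_congr rfl fun k _ => ?_
    rw [real_inner_smul_left, inner_sum, Finset.mul_sum]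
    refine Finset.sum_congr rfl fun l _ => ?_
    rw [real_inner_smul_right]; ring
  have hT3 : ∀ v v' : V, (inner ℝ (Tw v) ((v' : E)) : ℝ) = inner ℝ ((v : E)) (Tw v') := by
    intro v v'
    rw [hTwa v, hTwa v']
    conv_lhs => rw [← hσ v']
    conv_rhs => rw [← hσ v]
    rw [expand, expand]
    refine Finset.sum_congr rfl fun k _ => Finset.sum_congr rfl fun l _ => ?_
    rw [hb k l]
  -- the projection
  set Pl : E →ₗ[ℝ] V := V.orthogonalProjectionOnto.toLinearMap with hPl
  have hP : ∀ (z : E) (v : V), (inner ℝ (Pl z) v : ℝ) = inner ℝ z (v : E) := by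
    intro z v
    have h0 : (inner ℝ ((v:E)) (z - (V.orthogonalProjectionOnto z : E)) : ℝ) = 0 :=
      Submodule.inner_right_of_mem_orthogonal v.2 (Submodule.sub_starProjection_mem_orthogonal z)
    rw [inner_sub_right] at h0
    have h1 : (inner ℝ (v:E) ((V.orthogonalProjectionOnto z : E)) : ℝ) = inner ℝ (v:E) z := by linarith
    show (inner ℝ ((V.orthogonalProjectionOnto z : V)) v : ℝ) = inner ℝ z (v : E)
    rw [Submodule.coe_inner, real_inner_comm, h1, real_inner_comm]
  have hPnorm : ∀ z : E, ‖Pl z‖ ≤ ‖z‖ := by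
    intro z
    have h1 : (inner ℝ (Pl z) (Pl z) : ℝ) = inner ℝ z ((Pl z : E)) := hP z (Pl z)
    have h2 : (inner ℝ (Pl z) (Pl z) : ℝ) = ‖Pl z‖ * ‖Pl z‖ := real_inner_self_eq_norm_mul_norm _
    have h3 : (inner ℝ z ((Pl z : E)) : ℝ) ≤ ‖z‖ * ‖(Pl z : E)‖ := real_inner_le_norm _ _
    rw [show ‖((Pl z : V) : E)‖ = ‖Pl z‖ from (Submodule.coe_norm _).symm] at h3
    by_cases h : ‖Pl z‖ = 0
    · rw [h]; exact norm_nonneg z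
    · have h5 : 0 < ‖Pl z‖ := lt_of_le_of_ne (norm_nonneg _) (Ne.symm h)
      have h6 : ‖Pl z‖ * ‖Pl z‖ ≤ ‖z‖ * ‖Pl z‖ := by rw [← h2, h1]; exact h3
      exact le_of_mul_le_mul_right h6 h5
  -- the compression S
  set Slin : V →ₗ[ℝ] V := Pl.comp Tw with hSl
  have hSsym : Slin.IsSymmetric := by
    intro v v'
    calc (inner ℝ (Slin v) v' : ℝ) = inner ℝ (Tw v) ((v':E)) := hP (Tw v) v'
      _ = inner ℝ ((v:E)) (Tw v') := hT3 v v'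
      _ = inner ℝ (Tw v') ((v:E)) := real_inner_comm _ _
      _ = inner ℝ (Slin v') v := (hP (Tw v') v).symm
      _ = inner ℝ v (Slin v') := real_inner_comm _ _
  have hSnorm : ∀ v : V, ‖Slin v‖ ≤ ‖v‖ := fun v => (hPnorm (Tw v)).trans (hT2 v)
  -- spectral decomposition
  set b := hSsym.eigenvectorBasis rfl with hbdef
  set μ : Fin (Module.finrank ℝ V) → ℝ := fun i => hSsym.eigenvalues rfl i with hμdef
  have hSb : ∀ i, Slin (b i) = μ i • b i := by
    intro i
    have := hSsym.apply_eigenvectorBasis rfl i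
    simpa [hbdef, hμdef] using this
  have hbnorm : ∀ i, ‖b i‖ = 1 := fun i => b.orthonormal.1 i
  have hμ2 : ∀ i, μ i ^ 2 ≤ 1 := by
    intro i
    have h1 : ‖Slin (b i)‖ ≤ 1 := by
      have := hSnorm (b i); rwa [hbnorm i] at this
    rw [hSb i, norm_smul, hbnorm i, mul_one] at h1
    calc μ i ^ 2 = ‖μ i‖ ^ 2 := (sq_abs _).symm
      _ ≤ 1 ^ 2 := by apply pow_le_pow_left₀ (norm_nonneg _) h1
      _ = 1 := one_pow 2
  set d : Fin (Module.finrank ℝ V) → ℝ := fun i => Real.sqrt (1 - μ i ^ 2) with hddef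
  have hd2 : ∀ i, d i ^ 2 = 1 - μ i ^ 2 := fun i => Real.sq_sqrt (by linarith [hμ2 i])
  have hd0 : ∀ i, 0 ≤ d i := fun i => Real.sqrt_nonneg _
  set D : V →ₗ[ℝ] V := opDiag b d with hDdef
  set Dp : V →ₗ[ℝ] V := opDiag b (fun i => if d i = 0 then 0 else (d i)⁻¹) with hDpdef
  have hSdiag : Slin = opDiag b μ := by
    apply b.toBasis.ext
    intro i
    rw [OrthonormalBasis.coe_toBasis, hSb i, opDiag_basis]
  -- norms of diagonal operators
  have normsq_opDiag : ∀ (f : Fin (Module.finrank ℝ V) → ℝ) (v : V),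
      ‖opDiag b f v‖ ^ 2 = ∑ i, (f i) ^ 2 * (inner ℝ (b i) v : ℝ) ^ 2 := by
    intro f v
    rw [← real_inner_self_eq_norm_sq, opDiag_symm, opDiag_opDiag, real_inner_comm, inner_opDiag]
    exact Finset.sum_congr rfl fun i _ => by ring
  have normsq_base : ∀ v : V, ‖v‖ ^ 2 = ∑ i, (inner ℝ (b i) v : ℝ) ^ 2 := by
    intro v
    rw [← real_inner_self_eq_norm_sq, parseval b]
    exact Finset.sum_congr rfl fun i _ => by ring
  have hSDnormsq : ∀ v : V, ‖Slin v‖ ^ 2 + ‖D v‖ ^ 2 = ‖v‖ ^ 2 := by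
    intro v
    rw [hSdiag, hDdef, normsq_opDiag, normsq_opDiag, normsq_base, ← Finset.sum_add_distrib]
    refine Finset.sum_congr rfl fun i _ => ?_
    rw [hd2 i]; ring
  -- the off-diagonal block B
  set B : V →ₗ[ℝ] E := Tw - V.subtype.comp Slin with hBdef
  have hBv : ∀ v : V, B v = Tw v - ((Slin v : V) : E) := by
    intro v; simp [hBdef]
  have hBperp : ∀ (v v' : V), (inner ℝ (B v) ((v' : E)) : ℝ) = 0 := by
    intro v v'
    rw [hBv, inner_sub_left]
    have h1 : (inner ℝ (((Slin v : V) : E)) ((v' : E)) : ℝ) = inner ℝ (Slin v) v' := (Submodule.coe_inner V _ _).symm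
    have h2 : (inner ℝ (Slin v) v' : ℝ) = inner ℝ (Tw v) ((v' : E)) := hP (Tw v) v'
    rw [h1, h2, sub_self]
  have hBD : ∀ v : V, ‖B v‖ ≤ ‖D v‖ := by
    intro v
    have e1 : ‖Tw v‖ ^ 2 = ‖Slin v‖ ^ 2 + ‖B v‖ ^ 2 := by
      have hdec : Tw v = ((Slin v : V) : E) + B v := by rw [hBv]; abel
      have hz : (inner ℝ (((Slin v : V) : E)) (B v) : ℝ) = 0 := by
        rw [real_inner_comm]; exact hBperp v (Slin v)
      rw [hdec, @norm_add_sq_real, hz]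
      have : ‖((Slin v : V) : E)‖ = ‖Slin v‖ := (Submodule.coe_norm _).symm
      rw [this]; ring
    have e2 : ‖Tw v‖ ^ 2 ≤ ‖v‖ ^ 2 := by
      have := hT2 v
      exact pow_le_pow_left₀ (norm_nonneg _) this 2
    have e3 : ‖B v‖ ^ 2 ≤ ‖D v‖ ^ 2 := by
      linarith [hSDnormsq v]
    exact le_of_sq_le_sq' (norm_nonneg _) (norm_nonneg _) e3
  -- the contraction Kh with Kh ∘ D = B
  set Kh : V →ₗ[ℝ] E := B.comp Dp with hKhdef
  have hKD : ∀ v : V, Kh (D v) = B v := by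
    have hcomp : Kh.comp D = B := by
      apply b.toBasis.ext
      intro i
      rw [OrthonormalBasis.coe_toBasis, LinearMap.comp_apply]
      have hDb : D (b i) = d i • b i := opDiag_basis b d i
      have hDpb : Dp (b i) = (if d i = 0 then 0 else (d i)⁻¹) • b i := opDiag_basis b _ i
      rw [hDb, map_smul]
      show d i • B (Dp (b i)) = B (b i)
      rw [hDpb]
      by_cases h : d i = 0
      · have hB0 : B (b i) = 0 := by
          have h1 := hBD (b i)
          rw [hDb, h, zero_smul, norm_zero] at h1
          exact norm_le_zero_iff.mp h1
        rw [if_pos h, zero_smul, map_zero, smul_zero, hB0]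
      · rw [if_neg h, map_smul, smul_smul, mul_inv_cancel₀ h, one_smul]
    intro v
    exact congrArg (fun (L : V →ₗ[ℝ] E) => L v) hcomp ▸ rfl
  have hKnorm : ∀ v : V, ‖Kh v‖ ≤ ‖v‖ := by
    intro v
    have h1 : ‖Kh v‖ ≤ ‖D (Dp v)‖ := hBD (Dp v)
    have h2 : D (Dp v) = opDiag b (fun i => d i * (if d i = 0 then 0 else (d i)⁻¹)) v := by
      rw [hDdef, hDpdef, opDiag_opDiag]
    have h3 : ‖D (Dp v)‖ ^ 2 ≤ ‖v‖ ^ 2 := by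
      rw [h2, normsq_opDiag, normsq_base]
      refine Finset.sum_le_sum fun i _ => ?_
      by_cases h : d i = 0
      · rw [if_pos h, h]
        simp [sq_nonneg]
      · rw [if_neg h, mul_inv_cancel₀ h, one_pow, one_mul]
    exact h1.trans (le_of_sq_le_sq' (norm_nonneg _) (norm_nonneg _) h3)
  have hKperp : ∀ (v v' : V), (inner ℝ (Kh v) ((v' : E)) : ℝ) = 0 := fun v v' => hBperp (Dp v) v'
  -- the adjoint of Kh
  set A : E →ₗ[ℝ] V := LinearMap.adjoint Kh with hAdef
  have hA : ∀ (z : E) (v : V), (inner ℝ (A z) v : ℝ) = inner ℝ z (Kh v) := by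
    intro z v
    exact LinearMap.adjoint_inner_left Kh v z
  -- helper inner ℝ identities
  have hP' : ∀ (z : E) (a : V), (inner ℝ ((a : E)) z : ℝ) = inner ℝ a (Pl z) := by
    intro z a
    rw [real_inner_comm, ← hP z a, real_inner_comm]
  have hKh' : ∀ (z : E) (c : V), (inner ℝ (Kh c) z : ℝ) = inner ℝ c (A z) := by
    intro z c
    rw [real_inner_comm, ← hA z c, real_inner_comm]
  -- commutation of Slin and D
  have hSDcomm : ∀ u v : V, (inner ℝ (Slin u) (D v) : ℝ) = inner ℝ (D u) (Slin v) := by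
    intro u v
    rw [hSsym u (D v)]
    have e1 : Slin (D v) = opDiag b (fun i => μ i * d i) v := by
      rw [hSdiag, hDdef, opDiag_opDiag]
    have e2 : (inner ℝ (D u) (Slin v) : ℝ) = inner ℝ u (D (Slin v)) := by
      rw [hDdef, opDiag_symm]
    have e3 : D (Slin v) = opDiag b (fun i => d i * μ i) v := by
      rw [hSdiag, hDdef, opDiag_opDiag]
    rw [e1, e2, e3]
    have hfg : (fun i => μ i * d i) = (fun i => d i * μ i) := funext fun i => mul_comm _ _
    rw [hfg]
  -- assembling N
  set N : E →ₗ[ℝ] E :=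
    V.subtype.comp (Slin.comp Pl + D.comp A) + Kh.comp (D.comp Pl - Slin.comp A) with hNdef
  have hNapp : ∀ z : E, N z = ((Slin (Pl z) + D (A z) : V) : E) + Kh (D (Pl z) - Slin (A z)) := by
    intro z; simp [hNdef]
  have hNexp : ∀ z z' : E, (inner ℝ (N z) z' : ℝ) =
      inner ℝ (Slin (Pl z)) (Pl z') + inner ℝ (D (A z)) (Pl z')
        + inner ℝ (D (Pl z)) (A z') - inner ℝ (Slin (A z)) (A z') := by
    intro z z'
    rw [hNapp, inner_add_left, hP' z' _, hKh' z' _, inner_add_left, inner_sub_left]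
    ring
  refine ⟨N, ?_, ?_, ?_⟩
  · -- symmetry
    intro z z'
    rw [real_inner_comm (N z') z]
    rw [hNexp z z']
    rw [hNexp z' z]
    have e1 : (inner ℝ (Slin (Pl z')) (Pl z) : ℝ) = inner ℝ (Slin (Pl z)) (Pl z') := by
      rw [hSsym (Pl z') (Pl z), real_inner_comm]
    have e2 : (inner ℝ (D (A z')) (Pl z) : ℝ) = inner ℝ (D (Pl z)) (A z') := by
      rw [hDdef, opDiag_symm, real_inner_comm]
    have e3 : (inner ℝ (D (Pl z')) (A z) : ℝ) = inner ℝ (D (A z)) (Pl z') := by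
      rw [hDdef, opDiag_symm, real_inner_comm]
    have e4 : (inner ℝ (Slin (A z')) (A z) : ℝ) = inner ℝ (Slin (A z)) (A z') := by
      rw [hSsym (A z') (A z), real_inner_comm]
    linarith
  · -- the bound
    intro z
    set u : V := Pl z with hu
    set v : V := A z with hv
    set a : V := Slin u + D v with ha2
    set c : V := D u - Slin v with hc2
    have step1 : (inner ℝ z (N z) : ℝ) = inner ℝ u a + inner ℝ v c := by
      rw [real_inner_comm, hNexp z z, ha2, hc2, inner_add_right, inner_sub_right]
      have r1 : (inner ℝ (Slin u) u : ℝ) = inner ℝ u (Slin u) := real_inner_comm _ _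
      have r2 : (inner ℝ (D v) u : ℝ) = inner ℝ u (D v) := real_inner_comm _ _
      have r3 : (inner ℝ (D u) v : ℝ) = inner ℝ v (D u) := real_inner_comm _ _
      have r4 : (inner ℝ (Slin v) v : ℝ) = inner ℝ v (Slin v) := real_inner_comm _ _
      rw [← hu, ← hv]
      linarith [r1, r2, r3, r4]
    have step2 : ‖a‖ ^ 2 + ‖c‖ ^ 2 = ‖u‖ ^ 2 + ‖v‖ ^ 2 := by
      rw [ha2, hc2, @norm_add_sq_real, @norm_sub_sq_real]
      have r1 := hSDcomm u v
      have r2 := hSDnormsq u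
      have r3 := hSDnormsq v
      have r4 : ‖D u‖ ^ 2 + ‖Slin v‖ ^ 2 - 2 * inner ℝ (D u) (Slin v) +
          (‖Slin u‖ ^ 2 + 2 * (inner ℝ (Slin u) (D v) : ℝ) + ‖D v‖ ^ 2) = ‖u‖ ^ 2 + ‖v‖ ^ 2 := by
        rw [r1] at *
        linarith
      linarith [r4]
    have step3 : |(inner ℝ u a : ℝ) + inner ℝ v c| ≤ ‖u‖ ^ 2 + ‖v‖ ^ 2 := by
      have c1 : |(inner ℝ u a : ℝ)| ≤ ‖u‖ * ‖a‖ := abs_real_inner_le_norm _ _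
      have c2 : |(inner ℝ v c : ℝ)| ≤ ‖v‖ * ‖c‖ := abs_real_inner_le_norm _ _
      have c3 : |(inner ℝ u a : ℝ) + inner ℝ v c| ≤ ‖u‖ * ‖a‖ + ‖v‖ * ‖c‖ :=
        (abs_add_le _ _).trans (add_le_add c1 c2)
      refine c3.trans ?_
      exact cs2_aux (norm_nonneg u) (norm_nonneg v) (norm_nonneg a) (norm_nonneg c) step2
    have step4 : ‖u‖ ^ 2 + ‖v‖ ^ 2 ≤ ‖z‖ ^ 2 := by
      set t : ℝ := ‖u‖ ^ 2 + ‖v‖ ^ 2 with ht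
      have m1 : (inner ℝ (((u : V) : E) + Kh v) z : ℝ) = t := by
        rw [inner_add_left, hP' z u, hKh' z v, ← hu, ← hv, ht,
          real_inner_self_eq_norm_sq, real_inner_self_eq_norm_sq]
      have m2 : ‖((u : V) : E) + Kh v‖ ^ 2 ≤ t := by
        rw [@norm_add_sq_real]
        have z1 : (inner ℝ (((u : V) : E)) (Kh v) : ℝ) = 0 := by
          rw [real_inner_comm]; exact hKperp v u
        have z2 : ‖((u : V) : E)‖ = ‖u‖ := (Submodule.coe_norm _).symm
        have z3 : ‖Kh v‖ ^ 2 ≤ ‖v‖ ^ 2 :=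
          pow_le_pow_left₀ (norm_nonneg _) (hKnorm v) 2
        rw [z1, z2, ht]
        linarith
      have m3 : t ≤ ‖((u : V) : E) + Kh v‖ * ‖z‖ := by
        rw [← m1]; exact real_inner_le_norm _ _
      have m4 : 0 ≤ t := by positivity
      exact tz_aux m4 (norm_nonneg (((u : V) : E) + Kh v)) (norm_nonneg z) m2 m3
    calc |(inner ℝ z (N z) : ℝ)| = |(inner ℝ u a : ℝ) + inner ℝ v c| := by rw [step1]
      _ ≤ ‖u‖ ^ 2 + ‖v‖ ^ 2 := step3
      _ ≤ ‖z‖ ^ 2 := step4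
  · -- interpolation
    intro k
    have hxk : x k ∈ V := Submodule.subset_span (Set.mem_range_self k)
    set vk : V := ⟨x k, hxk⟩ with hvk
    have hu : Pl (x k) = vk := by
      apply Subtype.ext
      exact Submodule.starProjection_eq_self_iff.mpr hxk
    have hv : A (x k) = 0 := by
      have hz : ∀ v' : V, (inner ℝ (A (x k)) v' : ℝ) = 0 := by
        intro v'
        rw [hA]
        rw [real_inner_comm]
        exact hKperp v' vk
      have := hz (A (x k))
      exact inner_self_eq_zero.mp this
    have hTvk : Tw vk = w k := by
      have hc : ((vk : V) : E) = ∑ l, (if l = k then (1:ℝ) else 0) • x l := by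
        rw [hvk]
        simp [ite_smul]
      have := hT1 vk _ hc
      rw [this]
      simp [ite_smul]
    rw [hNapp, hu, hv, map_zero, add_zero, map_zero, sub_zero, hKD vk]
    rw [hBv vk]
    have : ((Slin vk : V) : E) + (Tw vk - ((Slin vk : V) : E)) = Tw vk := by abel
    rw [this, hTvk]

lemma ratio_aux {r s c : ℝ} (hr : 0 ≤ r) (hs : 0 ≤ s) (hc : 0 ≤ c) (h : r ^ 2 ≤ c * r * s) :
    r ≤ c * s := by
  rcases eq_or_lt_of_le hr with h0 | h0
  · rw [← h0]; positivity
  · have h1 : r * r ≤ (c * s) * r := by nlinarith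
    exact le_of_mul_le_mul_right h1 h0


lemma expand_inner {K : ℕ} (c c' : Fin K → ℝ) (a e : Fin K → E) :
    (inner ℝ (∑ k, c k • a k) (∑ l, c' l • e l) : ℝ)
      = ∑ k, ∑ l, c k * c' l * inner ℝ (a k) (e l) := by
  rw [sum_inner]
  refine Finset.sum_congr rfl fun k _ => ?_
  rw [real_inner_smul_left, inner_sum, Finset.mul_sum]
  refine Finset.sum_congr rfl fun l _ => ?_
  rw [real_inner_smul_right, mul_assoc]


theorem stmt_3 (m K : ℕ) (S : Submodule ℝ (EuclideanSpace ℝ (Fin m)))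
    (lm lp : ℝ) (hle : lm ≤ lp)
    (hlm : lm ∈ Set.Ioo (-1 : ℝ) 1) (hlp : lp ∈ Set.Ioo (-1 : ℝ) 1)
    (X Y : Fin K → EuclideanSpace ℝ (Fin m)) :
    (∃ M : EuclideanSpace ℝ (Fin m) →ₗ[ℝ] EuclideanSpace ℝ (Fin m),
        (∀ u v, (inner ℝ (M u) v : ℝ) = (inner ℝ u (M v) : ℝ)) ∧
        (∀ v ∈ S, M v = v) ∧
        (∀ v ∈ Sᗮ, lm * ‖v‖ ^ 2 ≤ (inner ℝ v (M v) : ℝ) ∧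
          (inner ℝ v (M v) : ℝ) ≤ lp * ‖v‖ ^ 2) ∧
        (∀ k, M (X k) = Y k)) ↔
      ((∀ k, ((S.orthogonalProjectionOnto (X k) : EuclideanSpace ℝ (Fin m)) =
          (S.orthogonalProjectionOnto (Y k) : EuclideanSpace ℝ (Fin m)))) ∧
       Matrix.PosSemidef (-(Matrix.of fun k l : Fin K =>
          (inner ℝ
            ((Y k - (S.orthogonalProjectionOnto (Y k) : EuclideanSpace ℝ (Fin m))) -
              lm • (X k - (S.orthogonalProjectionOnto (X k) : EuclideanSpace ℝ (Fin m))))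
            ((Y l - (S.orthogonalProjectionOnto (Y l) : EuclideanSpace ℝ (Fin m))) -
              lp • (X l - (S.orthogonalProjectionOnto (X l) : EuclideanSpace ℝ (Fin m)))) : ℝ))) ∧
       (∀ k l : Fin K,
          (inner ℝ (X k - (S.orthogonalProjectionOnto (X k) : EuclideanSpace ℝ (Fin m)))
            (Y l - (S.orthogonalProjectionOnto (Y l) : EuclideanSpace ℝ (Fin m))) : ℝ) =
          (inner ℝ (Y k - (S.orthogonalProjectionOnto (Y k) : EuclideanSpace ℝ (Fin m)))
            (X l - (S.orthogonalProjectionOnto (X l) : EuclideanSpace ℝ (Fin m))) : ℝ))) := by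
  classical
  set pX : Fin K → EuclideanSpace ℝ (Fin m) :=
    fun k => (S.orthogonalProjectionOnto (X k) : EuclideanSpace ℝ (Fin m)) with hpXdef
  set pY : Fin K → EuclideanSpace ℝ (Fin m) :=
    fun k => (S.orthogonalProjectionOnto (Y k) : EuclideanSpace ℝ (Fin m)) with hpYdef
  set xp : Fin K → EuclideanSpace ℝ (Fin m) := fun k => X k - pX k with hxpdef
  set yp : Fin K → EuclideanSpace ℝ (Fin m) := fun k => Y k - pY k with hypdef
  have hxpS : ∀ k, xp k ∈ Sᗮ := fun k => Submodule.sub_starProjection_mem_orthogonal (X k)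
  have hypS : ∀ k, yp k ∈ Sᗮ := fun k => Submodule.sub_starProjection_mem_orthogonal (Y k)
  have hpXS : ∀ k, pX k ∈ S := fun k => Submodule.coe_mem _
  have hpYS : ∀ k, pY k ∈ S := fun k => Submodule.coe_mem _
  constructor
  · rintro ⟨M, hsym, hfix, hbound, hinterp⟩
    have hMperp : ∀ v ∈ Sᗮ, M v ∈ Sᗮ := by
      intro v hv
      rw [Submodule.mem_orthogonal]
      intro u hu
      rw [← hsym u v, hfix u hu]
      exact (Submodule.mem_orthogonal S v).mp hv u hu
    have hYk : ∀ k, Y k = pX k + M (xp k) := by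
      intro k
      have hXk : X k = pX k + xp k := by
        show X k = pX k + (X k - pX k); abel
      calc Y k = M (X k) := (hinterp k).symm
        _ = M (pX k + xp k) := by rw [← hXk]
        _ = M (pX k) + M (xp k) := map_add _ _ _
        _ = pX k + M (xp k) := by rw [hfix (pX k) (hpXS k)]
    have hprojY : ∀ k, pY k = pX k := by
      intro k
      have e0 : (S.orthogonalProjectionOnto (Y k)) =
          (S.orthogonalProjectionOnto (pX k)) + (S.orthogonalProjectionOnto (M (xp k))) := by
        rw [hYk k, map_add]
      have e1 : ((S.orthogonalProjectionOnto (pX k)) : EuclideanSpace ℝ (Fin m)) = pX k :=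
        Submodule.starProjection_eq_self_iff.mpr (hpXS k)
      have e2 : S.orthogonalProjectionOnto (M (xp k)) = 0 :=
        Submodule.orthogonalProjectionOnto_apply_of_mem_orthogonal (hMperp _ (hxpS k))
      show ((S.orthogonalProjectionOnto (Y k)) : EuclideanSpace ℝ (Fin m)) = pX k
      rw [e0, e2, add_zero, e1]
    have hyp : ∀ k, yp k = M (xp k) := by
      intro k
      show Y k - pY k = M (xp k)
      rw [hYk k, hprojY k]; abel
    refine ⟨fun k => (hprojY k).symm, ?_, ?_⟩
    · -- PSD condition
      show Matrix.PosSemidef (-(Matrix.of fun k l : Fin K =>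
        (inner ℝ (yp k - lm • xp k) (yp l - lp • xp l) : ℝ)))
      have hswap : ∀ a b : EuclideanSpace ℝ (Fin m),
          (inner ℝ (M a - lm • a) (M b - lp • b) : ℝ) = inner ℝ (M b - lm • b) (M a - lp • a) := by
        intro a b
        simp only [inner_sub_left, inner_sub_right, real_inner_smul_left, real_inner_smul_right]
        have e1 : (inner ℝ (M a) (M b) : ℝ) = inner ℝ (M b) (M a) := real_inner_comm _ _
        have e2 : (inner ℝ (M a) b : ℝ) = inner ℝ a (M b) := hsym a b
        have e3 : (inner ℝ (M b) a : ℝ) = inner ℝ b (M a) := hsym b a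
        have e4 : (inner ℝ a b : ℝ) = inner ℝ b a := real_inner_comm _ _
        have e5 : (inner ℝ a (M b) : ℝ) = inner ℝ (M b) a := real_inner_comm _ _
        have e25 : (inner ℝ (M a) b : ℝ) = inner ℝ (M b) a := e2.trans e5
        have e7 : (inner ℝ b (M a) : ℝ) = inner ℝ (M b) a := (hsym b a).symm
        rw [e1, e25, e5, e4, e7]
      -- quadratic bound on the orthogonal complement
      have hApos : ∀ v ∈ Sᗮ, 0 ≤ (inner ℝ v (M v - lm • v) : ℝ) := by
        intro v hv
        rw [inner_sub_right, real_inner_smul_right, real_inner_self_eq_norm_sq]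
        linarith [(hbound v hv).1]
      have hAupper : ∀ v ∈ Sᗮ, (inner ℝ v (M v - lm • v) : ℝ) ≤ (lp - lm) * ‖v‖ ^ 2 := by
        intro v hv
        rw [inner_sub_right, real_inner_smul_right, real_inner_self_eq_norm_sq]
        linarith [(hbound v hv).2]
      have hAmem : ∀ v ∈ Sᗮ, M v - lm • v ∈ Sᗮ := fun v hv =>
        Submodule.sub_mem _ (hMperp v hv) (Submodule.smul_mem _ _ hv)
      have hCS : ∀ u ∈ Sᗮ, ∀ v ∈ Sᗮ, (inner ℝ u (M v - lm • v) : ℝ) ^ 2 ≤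
          (inner ℝ u (M u - lm • u) : ℝ) * (inner ℝ v (M v - lm • v) : ℝ) := by
        intro u hu v hv
        have hquad : ∀ t : ℝ, 0 ≤ (inner ℝ u (M u - lm • u) : ℝ) * (t * t)
            + (2 * (inner ℝ u (M v - lm • v) : ℝ)) * t + (inner ℝ v (M v - lm • v) : ℝ) := by
          intro t
          have hmem : t • u + v ∈ Sᗮ := Submodule.add_mem _ (Submodule.smul_mem _ _ hu) hv
          have h0 := hApos _ hmem
          have hexp : (inner ℝ (t • u + v) (M (t • u + v) - lm • (t • u + v)) : ℝ)
              = (inner ℝ u (M u - lm • u) : ℝ) * (t * t)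
                + (2 * (inner ℝ u (M v - lm • v) : ℝ)) * t + (inner ℝ v (M v - lm • v) : ℝ) := by
            have hM : M (t • u + v) = t • M u + M v := by rw [map_add, map_smul]
            rw [hM]
            simp only [smul_add, smul_smul, inner_sub_right, inner_add_left, inner_add_right,
              real_inner_smul_left, real_inner_smul_right, inner_sub_left]
            have s1 : (inner ℝ v (M u) : ℝ) = inner ℝ u (M v) := by
              rw [← hsym u v]; exact real_inner_comm _ _
            have s2 : (inner ℝ v u : ℝ) = inner ℝ u v := real_inner_comm _ _
            rw [s1, s2]; ring
          rw [hexp] at h0; exact h0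
        have hdis := discrim_le_zero hquad
        rw [discrim] at hdis
        nlinarith [hdis]
      have hkey : ∀ z ∈ Sᗮ, (inner ℝ (M z - lm • z) (M z - lp • z) : ℝ) ≤ 0 := by
        intro z hz
        set Az : EuclideanSpace ℝ (Fin m) := M z - lm • z with hAzdef
        have hAz : Az ∈ Sᗮ := hAmem z hz
        have r0 : (0:ℝ) ≤ inner ℝ Az Az := real_inner_self_nonneg
        have s0 : 0 ≤ (inner ℝ z Az : ℝ) := hApos z hz
        have cs := hCS Az hAz z hz
        have up := hAupper Az hAz
        have upn : (inner ℝ Az (M Az - lm • Az) : ℝ) ≤ (lp - lm) * (inner ℝ Az Az : ℝ) := by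
          rw [real_inner_self_eq_norm_sq]; exact up
        have posAz : 0 ≤ (inner ℝ Az (M Az - lm • Az) : ℝ) := hApos Az hAz
        have hr : (inner ℝ Az Az : ℝ) ≤ (lp - lm) * (inner ℝ z Az : ℝ) := by
          apply ratio_aux r0 s0 (by linarith)
          calc (inner ℝ Az Az : ℝ) ^ 2 = (inner ℝ Az (M z - lm • z) : ℝ) ^ 2 := by rw [← hAzdef]
            _ ≤ (inner ℝ Az (M Az - lm • Az) : ℝ) * (inner ℝ z (M z - lm • z) : ℝ) := cs
            _ = (inner ℝ Az (M Az - lm • Az) : ℝ) * (inner ℝ z Az : ℝ) := by rw [← hAzdef]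
            _ ≤ ((lp - lm) * (inner ℝ Az Az : ℝ)) * (inner ℝ z Az : ℝ) :=
                mul_le_mul_of_nonneg_right upn s0
            _ = (lp - lm) * (inner ℝ Az Az : ℝ) * (inner ℝ z Az : ℝ) := by ring
        have hfin : M z - lp • z = Az - (lp - lm) • z := by
          rw [hAzdef, sub_smul]; abel
        rw [hfin, inner_sub_right, real_inner_smul_right]
        have hcomm : (inner ℝ Az z : ℝ) = inner ℝ z Az := real_inner_comm _ _
        rw [hcomm]
        linarith [hr]
      refine Matrix.PosSemidef.of_dotProduct_mulVec_nonneg ?_ ?_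
      · -- Hermitian
        apply Matrix.IsHermitian.neg
        apply Matrix.ext
        intro k l
        simp only [Matrix.conjTranspose_apply, Matrix.of_apply, star_trivial]
        rw [hyp k, hyp l]
        exact hswap (xp l) (xp k)
      · -- positivity
        intro c
        have hzS : (∑ k, c k • xp k) ∈ Sᗮ :=
          Submodule.sum_mem _ fun k _ => Submodule.smul_mem _ _ (hxpS k)
        have hsum1 : ∑ k, c k • (yp k - lm • xp k)
            = M (∑ k, c k • xp k) - lm • (∑ k, c k • xp k) := by
          rw [map_sum, Finset.smul_sum]
          rw [← Finset.sum_sub_distrib]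
          refine Finset.sum_congr rfl fun k _ => ?_
          rw [hyp k, map_smul, smul_sub, smul_smul, smul_smul, mul_comm]
        have hsum2 : ∑ k, c k • (yp k - lp • xp k)
            = M (∑ k, c k • xp k) - lp • (∑ k, c k • xp k) := by
          rw [map_sum, Finset.smul_sum]
          rw [← Finset.sum_sub_distrib]
          refine Finset.sum_congr rfl fun k _ => ?_
          rw [hyp k, map_smul, smul_sub, smul_smul, smul_smul, mul_comm]
        have hdot : dotProduct c ((-(Matrix.of fun k l : Fin K =>
            (inner ℝ (yp k - lm • xp k) (yp l - lp • xp l) : ℝ))).mulVec c)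
            = -(inner ℝ (∑ k, c k • (yp k - lm • xp k)) (∑ l, c l • (yp l - lp • xp l)) : ℝ) := by
          rw [expand_inner]
          simp only [Matrix.mulVec, dotProduct, Matrix.neg_apply, Matrix.of_apply]
          rw [← Finset.sum_neg_distrib]
          refine Finset.sum_congr rfl fun k _ => ?_
          rw [Finset.mul_sum, ← Finset.sum_neg_distrib]
          refine Finset.sum_congr rfl fun l _ => ?_
          ring
        have hfinal : 0 ≤ dotProduct c ((-(Matrix.of fun k l : Fin K =>
            (inner ℝ (yp k - lm • xp k) (yp l - lp • xp l) : ℝ))).mulVec c) := by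
          rw [hdot, hsum1, hsum2]
          have := hkey _ hzS
          linarith
        simpa using hfinal
    · -- symmetry of cross Gram
      intro k l
      show (inner ℝ (xp k) (yp l) : ℝ) = inner ℝ (yp k) (xp l)
      rw [hyp k, hyp l]
      exact (hsym (xp k) (xp l)).symm
  · rintro ⟨h1, h2, h3⟩
    have h1' : ∀ k, pX k = pY k := h1
    have h2' : Matrix.PosSemidef (-(Matrix.of fun k l : Fin K =>
        (inner ℝ (yp k - lm • xp k) (yp l - lp • xp l) : ℝ))) := h2
    have h3' : ∀ k l, (inner ℝ (xp k) (yp l) : ℝ) = inner ℝ (yp k) (xp l) := h3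
    set μ₀ : ℝ := (lm + lp) / 2 with hμ₀
    set r : ℝ := (lp - lm) / 2 with hrdef
    have hr0 : 0 ≤ r := by rw [hrdef]; linarith
    have hlm' : lm = μ₀ - r := by rw [hμ₀, hrdef]; ring
    have hlp' : lp = μ₀ + r := by rw [hμ₀, hrdef]; ring
    set w : Fin K → EuclideanSpace ℝ (Fin m) := fun k => r⁻¹ • (yp k - μ₀ • xp k) with hwdef
    have hwS : ∀ k, w k ∈ Sᗮ := fun k =>
      Submodule.smul_mem _ _ (Submodule.sub_mem _ (hypS k) (Submodule.smul_mem _ _ (hxpS k)))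
    have hsplit : ∀ (t : ℝ) (c : Fin K → ℝ),
        ∑ k, c k • (yp k - t • xp k) = (∑ k, c k • yp k) - t • ∑ k, c k • xp k := by
      intro t c
      rw [Finset.smul_sum, ← Finset.sum_sub_distrib]
      refine Finset.sum_congr rfl fun k _ => ?_
      rw [smul_sub, smul_smul, smul_smul, mul_comm]
    have hdotG : ∀ c : Fin K → ℝ, dotProduct c ((-(Matrix.of fun k l : Fin K =>
        (inner ℝ (yp k - lm • xp k) (yp l - lp • xp l) : ℝ))).mulVec c)
        = -(inner ℝ (∑ k, c k • (yp k - lm • xp k)) (∑ l, c l • (yp l - lp • xp l)) : ℝ) := by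
      intro c
      rw [expand_inner]
      simp only [Matrix.mulVec, dotProduct, Matrix.neg_apply, Matrix.of_apply]
      rw [← Finset.sum_neg_distrib]
      refine Finset.sum_congr rfl fun k _ => ?_
      rw [Finset.mul_sum, ← Finset.sum_neg_distrib]
      refine Finset.sum_congr rfl fun l _ => ?_
      ring
    have hGc : ∀ c : Fin K → ℝ,
        (inner ℝ ((∑ k, c k • yp k) - lm • ∑ k, c k • xp k)
          ((∑ k, c k • yp k) - lp • ∑ k, c k • xp k) : ℝ) ≤ 0 := by
      intro c
      have h0 : 0 ≤ dotProduct c ((-(Matrix.of fun k l : Fin K =>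
          (inner ℝ (yp k - lm • xp k) (yp l - lp • xp l) : ℝ))).mulVec c) := by
        simpa using h2'.dotProduct_mulVec_nonneg c
      rw [hdotG, hsplit lm c, hsplit lp c] at h0
      linarith
    -- hypotheses of the core lemma
    have hcontr : ∀ c : Fin K → ℝ, ‖∑ k, c k • w k‖ ≤ ‖∑ k, c k • xp k‖ := by
      intro c
      have hsw : ∑ k, c k • w k = r⁻¹ • ((∑ k, c k • yp k) - μ₀ • ∑ k, c k • xp k) := by
        rw [← hsplit μ₀ c, Finset.smul_sum]
        refine Finset.sum_congr rfl fun k _ => ?_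
        rw [hwdef]
        exact smul_comm _ _ _
      rcases eq_or_lt_of_le hr0 with h0 | h0
      · rw [hsw, ← h0, inv_zero, zero_smul, norm_zero]
        exact norm_nonneg _
      · have hq := hGc c
        set u : EuclideanSpace ℝ (Fin m) := ∑ k, c k • yp k with hu
        set z : EuclideanSpace ℝ (Fin m) := ∑ k, c k • xp k with hz
        have e1 : ‖u - μ₀ • z‖ ^ 2 = ‖u‖ ^ 2 - 2 * μ₀ * inner ℝ u z + μ₀ ^ 2 * ‖z‖ ^ 2 := by
          rw [@norm_sub_sq_real, real_inner_smul_right, norm_smul]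
          rw [Real.norm_eq_abs, mul_pow, sq_abs]
          ring
        have e2 : (inner ℝ (u - lm • z) (u - lp • z) : ℝ)
            = ‖u‖ ^ 2 - (lm + lp) * inner ℝ u z + lm * lp * ‖z‖ ^ 2 := by
          simp only [inner_sub_left, inner_sub_right, real_inner_smul_left,
            real_inner_smul_right]
          have h9 : (inner ℝ z u : ℝ) = inner ℝ u z := real_inner_comm _ _
          rw [h9, real_inner_self_eq_norm_sq, real_inner_self_eq_norm_sq]
          ring
        rw [e2] at hq
        have hnsq : ‖u - μ₀ • z‖ ^ 2 ≤ (r * ‖z‖) ^ 2 := by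
          rw [e1, hμ₀, hrdef]
          ring_nf
          ring_nf at hq
          nlinarith [hq]
        have hle2 : ‖u - μ₀ • z‖ ≤ r * ‖z‖ :=
          le_of_sq_le_sq' (norm_nonneg _) (by positivity) hnsq
        rw [hsw, norm_smul, Real.norm_eq_abs, abs_of_pos (inv_pos.mpr h0)]
        calc r⁻¹ * ‖u - μ₀ • z‖ ≤ r⁻¹ * (r * ‖z‖) := by
              exact mul_le_mul_of_nonneg_left hle2 (le_of_lt (inv_pos.mpr h0))
          _ = ‖z‖ := by
              rw [← mul_assoc, inv_mul_cancel₀ (ne_of_gt h0), one_mul]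
    have hbw : ∀ k l, (inner ℝ (xp k) (w l) : ℝ) = inner ℝ (w k) (xp l) := by
      intro k l
      rw [hwdef]
      show (inner ℝ (xp k) (r⁻¹ • (yp l - μ₀ • xp l)) : ℝ)
        = inner ℝ (r⁻¹ • (yp k - μ₀ • xp k)) (xp l)
      simp only [real_inner_smul_left, real_inner_smul_right, inner_sub_left, inner_sub_right]
      rw [h3' k l]
    obtain ⟨N, hNsym, hNbound, hNinterp⟩ := core_lemma xp w hcontr hbw
    -- assembling M
    set Q : EuclideanSpace ℝ (Fin m) →ₗ[ℝ] EuclideanSpace ℝ (Fin m) :=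
      S.subtype ∘ₗ S.orthogonalProjectionOnto.toLinearMap with hQdef
    have hQapp : ∀ z, Q z = (S.orthogonalProjectionOnto z : EuclideanSpace ℝ (Fin m)) := fun z => rfl
    have hQsym : ∀ u v, (inner ℝ (Q u) v : ℝ) = inner ℝ u (Q v) := fun u v =>
      Submodule.inner_starProjection_left_eq_right S u v
    have hQS : ∀ v ∈ S, Q v = v := fun v hv => Submodule.starProjection_eq_self_iff.mpr hv
    have hQperp : ∀ v ∈ Sᗮ, Q v = 0 := by
      intro v hv
      rw [hQapp, Submodule.orthogonalProjectionOnto_apply_of_mem_orthogonal hv,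
        Submodule.coe_zero]
    set Pp : EuclideanSpace ℝ (Fin m) →ₗ[ℝ] EuclideanSpace ℝ (Fin m) := LinearMap.id - Q with hPpdef
    have hPpapp : ∀ z, Pp z = z - Q z := fun z => rfl
    have hPpS : ∀ v ∈ S, Pp v = 0 := by
      intro v hv; rw [hPpapp, hQS v hv, sub_self]
    have hPpPerp : ∀ v ∈ Sᗮ, Pp v = v := by
      intro v hv; rw [hPpapp, hQperp v hv, sub_zero]
    have hPpsym : ∀ u v, (inner ℝ (Pp u) v : ℝ) = inner ℝ u (Pp v) := by
      intro u v
      rw [hPpapp, hPpapp, inner_sub_left, inner_sub_right, hQsym u v]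
    set Mfull : EuclideanSpace ℝ (Fin m) →ₗ[ℝ] EuclideanSpace ℝ (Fin m) :=
      Q + μ₀ • (LinearMap.id - Q) + r • (Pp ∘ₗ N ∘ₗ Pp) with hMdef
    have hMapp : ∀ z, Mfull z = Q z + μ₀ • (z - Q z) + r • (Pp (N (Pp z))) := fun z => rfl
    have hNp : ∀ u v, (inner ℝ (Pp (N (Pp u))) v : ℝ) = inner ℝ u (Pp (N (Pp v))) := by
      intro u v
      rw [hPpsym (N (Pp u)) v, hNsym (Pp u) (Pp v), ← hPpsym u (N (Pp v))]
    refine ⟨Mfull, ?_, ?_, ?_, ?_⟩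
    · intro u v
      rw [hMapp u, hMapp v]
      simp only [inner_add_left, inner_add_right, real_inner_smul_left, real_inner_smul_right,
        inner_sub_left, inner_sub_right]
      rw [hQsym u v, hNp u v]
    · intro v hv
      rw [hMapp v, hQS v hv, hPpS v hv, map_zero, map_zero, smul_zero, sub_self, smul_zero,
        add_zero, add_zero]
    · intro v hv
      have habs := abs_le.mp (hNbound v)
      have hvN : (inner ℝ v (Mfull v) : ℝ) = μ₀ * ‖v‖ ^ 2 + r * inner ℝ v (N v) := by
        rw [hMapp v, hQperp v hv]
        simp only [zero_add, sub_zero, inner_add_right, real_inner_smul_right]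
        rw [real_inner_self_eq_norm_sq]
        have hPv : Pp v = v := hPpPerp v hv
        have : (inner ℝ v (Pp (N (Pp v))) : ℝ) = inner ℝ v (N v) := by
          rw [← hPpsym v (N (Pp v)), hPv]
        rw [this]
      rw [hvN, hlm', hlp']
      constructor
      · nlinarith [mul_le_mul_of_nonneg_left habs.1 hr0]
      · nlinarith [mul_le_mul_of_nonneg_left habs.2 hr0]
    · intro k
      have hQX : Q (X k) = pX k := rfl
      have hPpX : Pp (X k) = xp k := rfl
      have hYpk : Y k = pY k + yp k := by
        show Y k = pY k + (Y k - pY k); abel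
      have hstep : Mfull (X k) = pX k + μ₀ • xp k + r • w k := by
        rw [hMapp, hQX, hPpX, hNinterp k, hPpPerp _ (hwS k)]
      rcases eq_or_lt_of_le hr0 with h0 | h0
      · -- r = 0 : lm = lp and yp k = lm • xp k
        have hlmlp : lp = lm := by rw [hlm', hlp', ← h0]; ring
        have hypk : yp k = lm • xp k := by
          have hc := hGc (fun l => if l = k then 1 else 0)
          simp only [ite_smul, one_smul, zero_smul, Finset.sum_ite_eq',
            Finset.mem_univ, if_true] at hc
          rw [hlmlp] at hc
          have : (inner ℝ (yp k - lm • xp k) (yp k - lm • xp k) : ℝ) ≤ 0 := hc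
          have h5 := inner_self_eq_zero.mp (le_antisymm this real_inner_self_nonneg)
          have := sub_eq_zero.mp h5
          exact this
        have hμlm : μ₀ = lm := by rw [hlm', ← h0, sub_zero]
        rw [hstep, ← h0, zero_smul, add_zero, hμlm, ← hypk, h1' k, ← hYpk]
      · have hrw : r • w k = yp k - μ₀ • xp k := by
          rw [hwdef]
          show r • (r⁻¹ • (yp k - μ₀ • xp k)) = yp k - μ₀ • xp k
          rw [smul_smul, mul_inv_cancel₀ (ne_of_gt h0), one_smul]
        rw [hstep, hrw, h1' k, hYpk]
        abel
end

section
/- Let X, Y ∈ ℝ^{d×K} be such that there exists a symmetric matrix B ∈ ℝ^{d×d} with all eigenvalues in [λ⁻, λ⁺] and Y = BX. Then (Y − λ⁻X)ᵀ(Y − λ⁺X) ⪯ 0 and XᵀY = YᵀX. -/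
/-!
Since `B` is symmetric with Rayleigh quotients in `[λ⁻, λ⁺]`, its spectrum lies in `[λ⁻, λ⁺]`, so
by the functional calculus `(B - λ⁻)(λ⁺ - B) = f(B)` with `f(x) = (x - λ⁻)(λ⁺ - x) ≥ 0` there is
positive semidefinite. Substituting `Y = BX` gives
`-(Y - λ⁻X)ᵀ(Y - λ⁺X) = Xᵀ (B - λ⁻)(λ⁺ - B) X ⪰ 0`, and `XᵀY = XᵀBX = (BX)ᵀX = YᵀX`.
-/

open Matrix

open scoped MatrixOrder

namespace Matrix

variable {n : Type*} [Fintype n] [DecidableEq n] {B : Matrix n n ℝ} {a b : ℝ}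

lemma posSemidef_sub_smul_one_of_le_dotProduct_mulVec (hB : B.IsHermitian)
    (h : ∀ v : n → ℝ, a * (v ⬝ᵥ v) ≤ v ⬝ᵥ B *ᵥ v) : (B - a • 1).PosSemidef := by
  refine .of_dotProduct_mulVec_nonneg (hB.sub (isHermitian_one.smul (.all a))) fun v => ?_
  simpa [sub_mulVec, dotProduct_sub, smul_mulVec, dotProduct_smul] using h v

lemma posSemidef_smul_one_sub_of_dotProduct_mulVec_le (hB : B.IsHermitian)
    (h : ∀ v : n → ℝ, v ⬝ᵥ B *ᵥ v ≤ b * (v ⬝ᵥ v)) : (b • 1 - B).PosSemidef := by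
  refine .of_dotProduct_mulVec_nonneg ((isHermitian_one.smul (.all b)).sub hB) fun v => ?_
  simpa [sub_mulVec, dotProduct_sub, smul_mulVec, dotProduct_smul] using h v

lemma IsHermitian.spectrum_subset_Icc (hB : B.IsHermitian)
    (ha : ∀ v : n → ℝ, a * (v ⬝ᵥ v) ≤ v ⬝ᵥ B *ᵥ v)
    (hb : ∀ v : n → ℝ, v ⬝ᵥ B *ᵥ v ≤ b * (v ⬝ᵥ v)) : spectrum ℝ B ⊆ Set.Icc a b := by
  have hBa : algebraMap ℝ _ a ≤ B := by
    rw [le_iff, Algebra.algebraMap_eq_smul_one]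
    exact posSemidef_sub_smul_one_of_le_dotProduct_mulVec hB ha
  have hBb : B ≤ algebraMap ℝ _ b := by
    rw [le_iff, Algebra.algebraMap_eq_smul_one]
    exact posSemidef_smul_one_sub_of_dotProduct_mulVec_le hB hb
  exact fun x hx => ⟨(algebraMap_le_iff_le_spectrum hB.isSelfAdjoint).1 hBa x hx,
    (le_algebraMap_iff_spectrum_le hB.isSelfAdjoint).1 hBb x hx⟩

lemma IsHermitian.posSemidef_sub_smul_one_mul_smul_one_sub (hB : B.IsHermitian)
    (h : spectrum ℝ B ⊆ Set.Icc a b) : ((B - a • 1) * (b • 1 - B)).PosSemidef := by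
  have hsa : IsSelfAdjoint B := hB.isSelfAdjoint
  have hcfc : cfc (fun x : ℝ => (x - a) * (b - x)) B = (B - a • 1) * (b • 1 - B) := by
    rw [cfc_mul _ _ B, cfc_sub _ _ B, cfc_sub _ _ B, cfc_id' ℝ B, cfc_const a B, cfc_const b B]
    simp only [Algebra.algebraMap_eq_smul_one]
  rw [← hcfc, ← nonneg_iff_posSemidef]
  exact cfc_nonneg fun x hx => mul_nonneg (sub_nonneg.2 (h hx).1) (sub_nonneg.2 (h hx).2)

end Matrix

theorem stmt_4_general (d K : ℕ) (lm lp : ℝ)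
    (X Y : Matrix (Fin d) (Fin K) ℝ) (B : Matrix (Fin d) (Fin d) ℝ)
    (hB : B.IsSymm)
    (heig : ∀ v : Fin d → ℝ,
      lm * (v ⬝ᵥ v) ≤ v ⬝ᵥ B.mulVec v ∧ v ⬝ᵥ B.mulVec v ≤ lp * (v ⬝ᵥ v))
    (hY : Y = B * X) :
    (-((Y - lm • X)ᵀ * (Y - lp • X))).PosSemidef ∧ Xᵀ * Y = Yᵀ * X := by
  have hH : B.IsHermitian := isHermitian_iff_isSymm.2 hB
  have hN : ((B - lm • 1) * (lp • 1 - B)).PosSemidef :=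
    hH.posSemidef_sub_smul_one_mul_smul_one_sub
      (hH.spectrum_subset_Icc (fun v => (heig v).1) (fun v => (heig v).2))
  have hform : -((Y - lm • X)ᵀ * (Y - lp • X)) = Xᴴ * ((B - lm • 1) * (lp • 1 - B)) * X := by
    have hsymm : (B - lm • 1)ᵀ = B - lm • 1 := by
      rw [transpose_sub, transpose_smul, transpose_one, hB]
    have hlm : Y - lm • X = (B - lm • 1) * X := by
      rw [hY, Matrix.sub_mul, Matrix.smul_mul, Matrix.one_mul]
    have hlp : Y - lp • X = -((lp • 1 - B) * X) := by
      rw [hY, Matrix.sub_mul, Matrix.smul_mul, Matrix.one_mul, neg_sub]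
    rw [hlm, hlp, Matrix.mul_neg, neg_neg, transpose_mul, hsymm,
      conjTranspose_eq_transpose_of_trivial, Matrix.mul_assoc, Matrix.mul_assoc, Matrix.mul_assoc]
  refine ⟨hform ▸ hN.conjTranspose_mul_mul_same X, ?_⟩
  rw [hY, transpose_mul, hB, Matrix.mul_assoc]

theorem stmt_4 (d K : ℕ) (lm lp : ℝ) (hle : lm ≤ lp)
    (X Y : Matrix (Fin d) (Fin K) ℝ) (B : Matrix (Fin d) (Fin d) ℝ)
    (hB : B.IsSymm)
    (heig : ∀ v : Fin d → ℝ,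
      lm * (v ⬝ᵥ v) ≤ v ⬝ᵥ B.mulVec v ∧ v ⬝ᵥ B.mulVec v ≤ lp * (v ⬝ᵥ v))
    (hY : Y = B * X) :
    (-((Y - lm • X)ᵀ * (Y - lp • X))).PosSemidef ∧ Xᵀ * Y = Yᵀ * X :=
  stmt_4_general d K lm lp X Y B hB heig hY
end

section
/- Let G^s = I_n ⊗ (Gᵃ − Gᵇ) + 𝟏_n𝟏_nᵀ ⊗ Gᵇ with Gᵃ, Gᵇ symmetric p×p matrices and n ≥ 2, and define G^T = (1/n)(Gᵃ + (n−1)Gᵇ). Then G^s ⪰ 0 if and only if G^T ⪰ 0 and Gᵃ − G^T ⪰ 0. -/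
/-!
Write `A = Gᵃ - Gᵇ`, `J` for the all-ones `n × n` matrix and `P = I - J / n`. Then
`Gˢ = P ⊗ A + J ⊗ Gᵀ`, `Gᵀ = A / n + Gᵇ` and `Gᵃ - Gᵀ = ((n - 1) / n) A`, so the claim is that
`Gˢ ⪰ 0` iff `A ⪰ 0` and `Gᵀ ⪰ 0`. Since `P` and `J` are positive semidefinite, sufficiency
follows because positive semidefiniteness is closed under Kronecker products and sums.
Conversely, compressing `Gˢ` along `c ⊗ I` gives `(cᴴ c) A + |∑ cᵢ|² Gᵇ ⪰ 0`; the vector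
`c = eᵢ - eⱼ` yields `2 A ⪰ 0` and the all-ones vector yields `n² Gᵀ ⪰ 0`.
-/

open Matrix Kronecker
open scoped ComplexOrder

namespace Matrix

variable {ι p R 𝕜 : Type*}

theorem posSemidef_smul_iff [RCLike 𝕜] {c : 𝕜} (hc : 0 < c) {M : Matrix ι ι 𝕜} :
    (c • M).PosSemidef ↔ M.PosSemidef := by
  refine ⟨fun h => ?_, fun h => h.smul hc.le⟩
  simpa [smul_smul, inv_mul_cancel₀ hc.ne'] using h.smul (RCLike.inv_pos.2 hc).le

variable [Fintype ι]

theorem allOnes_mul_allOnes [NonAssocSemiring R] :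
    (of fun _ _ : ι => (1 : R)) * (of fun _ _ : ι => (1 : R)) =
      (Fintype.card ι : R) • of fun _ _ : ι => (1 : R) := by
  ext i j
  simp [mul_apply]

theorem star_dotProduct_allOnes_mulVec [Semiring R] [StarRing R] (c : ι → R) :
    star c ⬝ᵥ (of fun _ _ : ι => (1 : R)) *ᵥ c = star (∑ i, c i) * ∑ i, c i := by
  simp [dotProduct, mulVec, star_sum, Finset.sum_mul]

theorem posSemidef_allOnes [CommRing R] [PartialOrder R] [StarRing R] [StarOrderedRing R] :
    (of fun _ _ : ι => (1 : R)).PosSemidef := by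
  simpa [vecMulVec] using posSemidef_vecMulVec_self_star (fun _ : ι => (1 : R))

/-- `c ⊗ I` as an `(ι × p) × p` matrix. -/
def kroneckerCol [Zero R] [One R] [Mul R] [DecidableEq p] (c : ι → R) : Matrix (ι × p) p R :=
  of fun ik l => c ik.1 * (1 : Matrix p p R) ik.2 l

section Compression

variable [Fintype p] [DecidableEq p]

theorem kroneckerCol_conjTranspose_mul_kronecker_mul [CommSemiring R] [StarRing R] (c : ι → R)
    (M : Matrix ι ι R) (N : Matrix p p R) :
    (kroneckerCol c : Matrix (ι × p) p R)ᴴ * (M ⊗ₖ N) * (kroneckerCol c : Matrix (ι × p) p R) =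
      (star c ⬝ᵥ M *ᵥ c) • N := by
  ext k l
  simp only [Matrix.mul_apply, conjTranspose_apply, kroneckerCol, one_apply, mul_ite, mul_one,
    mul_zero, of_apply, apply_ite star, star_zero, kroneckerMap_apply, ite_mul, zero_mul,
    Fintype.sum_prod_type, Finset.sum_ite_eq', Finset.mem_univ, ↓reduceIte, Finset.sum_mul,
    dotProduct, Pi.star_apply, mulVec, Finset.mul_sum, smul_apply, smul_eq_mul]
  rw [Finset.sum_comm]
  exact Finset.sum_congr rfl fun _ _ => Finset.sum_congr rfl fun _ _ => by ring

theorem PosSemidef.smul_add_smul_of_kronecker_add_kronecker [CommRing R] [PartialOrder R]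
    [StarRing R] {M M' : Matrix ι ι R} {N N' : Matrix p p R}
    (h : (M ⊗ₖ N + M' ⊗ₖ N').PosSemidef) (c : ι → R) :
    ((star c ⬝ᵥ M *ᵥ c) • N + (star c ⬝ᵥ M' *ᵥ c) • N').PosSemidef := by
  simpa only [Matrix.mul_add, Matrix.add_mul, kroneckerCol_conjTranspose_mul_kronecker_mul] using
    h.conjTranspose_mul_mul_same (kroneckerCol c : Matrix (ι × p) p R)

end Compression

variable [RCLike 𝕜] [DecidableEq ι]

theorem posSemidef_one_sub_inv_card_smul_allOnes :
    (1 - (Fintype.card ι : 𝕜)⁻¹ • of fun _ _ : ι => (1 : 𝕜)).PosSemidef := by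
  set c := (Fintype.card ι : 𝕜)⁻¹
  set J : Matrix ι ι 𝕜 := of fun _ _ => 1
  have hJ : Jᴴ = J := by ext; simp [J]
  have hc : star c = c := by simp [c]
  have hcc : c * c * (Fintype.card ι : 𝕜) = c := by
    simpa [c, mul_right_comm] using mul_inv_mul_cancel c
  -- `1 - c • J` is an orthogonal projection, hence of the form `Pᴴ * P`.
  have hP : (1 - c • J)ᴴ * (1 - c • J) = 1 - c • J := by
    rw [conjTranspose_sub, conjTranspose_one, conjTranspose_smul, hJ, hc, Matrix.sub_mul,
      Matrix.mul_sub, Matrix.mul_sub, smul_mul_smul, allOnes_mul_allOnes, smul_smul, hcc,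
      Matrix.one_mul, Matrix.one_mul, Matrix.mul_one, sub_self, sub_zero]
  exact hP ▸ posSemidef_conjTranspose_mul_self _

theorem one_kronecker_add_allOnes_kronecker (A B : Matrix p p 𝕜) :
    (1 : Matrix ι ι 𝕜) ⊗ₖ A + (of fun _ _ : ι => (1 : 𝕜)) ⊗ₖ B =
      (1 - (Fintype.card ι : 𝕜)⁻¹ • of fun _ _ : ι => (1 : 𝕜)) ⊗ₖ A +
        (of fun _ _ : ι => (1 : 𝕜)) ⊗ₖ ((Fintype.card ι : 𝕜)⁻¹ • A + B) := by
  conv_lhs =>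
    rw [← sub_add_cancel (1 : Matrix ι ι 𝕜) ((Fintype.card ι : 𝕜)⁻¹ • of fun _ _ : ι => (1 : 𝕜))]
  rw [add_kronecker, smul_kronecker, kronecker_add, ← kronecker_smul]
  abel

theorem posSemidef_one_kronecker_add_allOnes_kronecker_iff [Nontrivial ι] [Fintype p]
    [DecidableEq p] (A B : Matrix p p 𝕜) :
    ((1 : Matrix ι ι 𝕜) ⊗ₖ A + (of fun _ _ : ι => (1 : 𝕜)) ⊗ₖ B).PosSemidef ↔
      A.PosSemidef ∧ ((Fintype.card ι : 𝕜)⁻¹ • A + B).PosSemidef := by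
  refine ⟨fun h => ⟨?_, ?_⟩, fun ⟨hA, hB⟩ => ?_⟩
  · obtain ⟨i, j, hij⟩ := exists_pair_ne ι
    have h2A := h.smul_add_smul_of_kronecker_add_kronecker (Pi.single i 1 - Pi.single j 1)
    rw [star_dotProduct_allOnes_mulVec] at h2A
    rw [← posSemidef_smul_iff (zero_lt_two' 𝕜)]
    simpa [hij, one_add_one_eq_two] using h2A
  · have hn : (0 : 𝕜) < Fintype.card ι := Nat.cast_pos'.2 Fintype.card_pos
    have hT := h.smul_add_smul_of_kronecker_add_kronecker (fun _ => 1)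
    rw [star_dotProduct_allOnes_mulVec] at hT
    rw [← posSemidef_smul_iff (mul_pos hn hn), smul_add, smul_smul, mul_assoc,
      mul_inv_cancel₀ hn.ne', mul_one]
    simpa [dotProduct] using hT
  · rw [one_kronecker_add_allOnes_kronecker]
    exact (posSemidef_one_sub_inv_card_smul_allOnes.kronecker hA).add
      (posSemidef_allOnes.kronecker hB)

end Matrix

theorem stmt_8_general (n p : ℕ) (hn : 2 ≤ n) (Ga Gb : Matrix (Fin p) (Fin p) ℝ) :
    ((1 : Matrix (Fin n) (Fin n) ℝ) ⊗ₖ (Ga - Gb) +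
        (Matrix.of fun _ _ : Fin n => (1 : ℝ)) ⊗ₖ Gb).PosSemidef ↔
      ((n : ℝ)⁻¹ • (Ga + ((n : ℝ) - 1) • Gb)).PosSemidef ∧
        (Ga - (n : ℝ)⁻¹ • (Ga + ((n : ℝ) - 1) • Gb)).PosSemidef := by
  have : Nontrivial (Fin n) := Fin.nontrivial_iff_two_le.2 hn
  have hn' : (1 : ℝ) < n := by exact_mod_cast hn
  have hGT : (n : ℝ)⁻¹ • (Ga + ((n : ℝ) - 1) • Gb) = (n : ℝ)⁻¹ • (Ga - Gb) + Gb := by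
    match_scalars <;> field_simp; ring
  have hGaGT : Ga - (n : ℝ)⁻¹ • (Ga + ((n : ℝ) - 1) • Gb) = (((n : ℝ) - 1) / n) • (Ga - Gb) := by
    match_scalars <;> field_simp
  rw [posSemidef_one_kronecker_add_allOnes_kronecker_iff, Fintype.card_fin, hGaGT, hGT,
    posSemidef_smul_iff (div_pos (by linarith) (by linarith)), and_comm]

theorem stmt_8 (n p : ℕ) (hn : 2 ≤ n) (Ga Gb : Matrix (Fin p) (Fin p) ℝ)
    (hGa : Ga.IsSymm) (hGb : Gb.IsSymm) :
    ((1 : Matrix (Fin n) (Fin n) ℝ) ⊗ₖ (Ga - Gb) +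
        (Matrix.of fun _ _ : Fin n => (1 : ℝ)) ⊗ₖ Gb).PosSemidef ↔
      ((n : ℝ)⁻¹ • (Ga + ((n : ℝ) - 1) • Gb)).PosSemidef ∧
        (Ga - (n : ℝ)⁻¹ • (Ga + ((n : ℝ) - 1) • Gb)).PosSemidef :=
  stmt_8_general n p hn Ga Gb
end

section
/- Let n₁,…,n_U ≥ 1 with ∑ n_u = n. Let G^s ∈ ℝ^{np×np} be block-structured by classes: within class u with n_u ≥ 2, diagonal blocks equal symmetric Gᵃᵘ, off-diagonal blocks within class u equal symmetric Gᵇᵘ, blocks between classes u ≠ v all equal Gᶜᵘᵛ (with Gᶜᵛᵘ = (Gᶜᵘᵛ)ᵀ), and for classes with n_u = 1 set Gᵇᵘ = 0. Define H ∈ ℝ^{Up×Up} by H^{uu} = n_u Gᵃᵘ + n_u(n_u−1)Gᵇᵘ and H^{uv} = n_u n_v Gᶜᵘᵛ for u ≠ v. Then G^s ⪰ 0 if and only if H ⪰ 0 and, for every class u with n_u ≥ 2, Gᵃᵘ − Gᵇᵘ ⪰ 0, and for every class u with n_u = 1, Gᵃᵘ ⪰ 0. -/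
/-!
Write `Gˢ` as `K` pulled back along the class projection plus the block diagonal of the
`Aᵘ = Gᵃᵘ - Gᵇᵘ`, where `K` has blocks `Gᵇᵘ` on and `Gᶜᵘᵛ` off its diagonal; then
`H = N K N + diag(n_u Aᵘ)` with `N` the diagonal of class sizes. If `w` is the vector of class
means of `z`, so that `N w` is the vector of class sums, then
`zᵀ Gˢ z = wᵀ H w + ∑_u ∑_i (z_{u,i} - w_u)ᵀ Aᵘ (z_{u,i} - w_u)`,
the matrix form of splitting a sum of squares into a between-class and a within-class part.
Testing it on vectors constant on each class gives `H ⪰ 0`, on `f` at one member of a class and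
`-f` at another gives `Aᵘ ⪰ 0`, and conversely it writes `zᵀ Gˢ z` as a sum of nonnegative terms.
-/

open Matrix Function

namespace ClassBlock

variable {R ι α m : Type*} {κ : ι → Type*}

def crossMemberMatrix [DecidableEq ι] (Gb : ι → Matrix m m R) (Gc : ι → ι → Matrix m m R) :
    Matrix (ι × m) (ι × m) R :=
  of fun p q => if p.1 = q.1 then Gb p.1 p.2 q.2 else Gc p.1 q.1 p.2 q.2

theorem isSymm_crossMemberMatrix [DecidableEq ι] {Gb : ι → Matrix m m R}
    {Gc : ι → ι → Matrix m m R} (hGb : ∀ u, (Gb u).IsSymm) (hGc : ∀ u v, Gc v u = (Gc u v)ᵀ) :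
    (crossMemberMatrix Gb Gc).IsSymm := by
  ext ⟨u, x⟩ ⟨v, y⟩
  by_cases huv : u = v
  · subst huv; simpa [crossMemberMatrix] using (hGb u).apply x y
  · simp [crossMemberMatrix, huv, Ne.symm huv, hGc u v]

section Algebra

variable [CommRing R]

theorem dotProduct_comp_diagonal_mulVec [Fintype α] [DecidableEq α] [Fintype m]
    (B : α → Matrix m m R) (z z' : α × m → R) :
    z ⬝ᵥ comp α α m m R (diagonal B) *ᵥ z' = ∑ a, curry z a ⬝ᵥ B a *ᵥ curry z' a := by
  simp only [dotProduct, mulVec, Matrix.comp_apply, Fintype.sum_prod_type, curry]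
  refine Finset.sum_congr rfl fun a _ => Finset.sum_congr rfl fun x _ => ?_
  rw [Fintype.sum_eq_single a fun b hb => by simp [diagonal_apply_ne _ (Ne.symm hb)]]
  simp

theorem isSymm_comp_diagonal [DecidableEq α] {B : α → Matrix m m R} (hB : ∀ a, (B a).IsSymm) :
    (comp α α m m R (diagonal B)).IsSymm := by
  ext ⟨a, x⟩ ⟨b, y⟩
  by_cases hab : a = b
  · subst hab; simpa using (hB a).apply x y
  · simp [hab, Ne.symm hab]

theorem sum_sub_dotProduct_mulVec_sub {n : Type*} [Fintype n] [Fintype m] (A : Matrix m m R)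
    (v : n → m → R) (w : m → R) (hw : ∑ i, v i = Fintype.card n • w) :
    ∑ i, (v i - w) ⬝ᵥ A *ᵥ (v i - w) = ∑ i, v i ⬝ᵥ A *ᵥ v i - Fintype.card n • (w ⬝ᵥ A *ᵥ w) := by
  have hleft : ∑ i, v i ⬝ᵥ A *ᵥ w = Fintype.card n • (w ⬝ᵥ A *ᵥ w) := by
    rw [← sum_dotProduct, hw, smul_dotProduct]
  have hright : ∑ i, w ⬝ᵥ A *ᵥ v i = Fintype.card n • (w ⬝ᵥ A *ᵥ w) := by
    rw [← dotProduct_sum, ← mulVec_sum, hw, mulVec_smul, dotProduct_smul]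
  simp only [mulVec_sub, sub_dotProduct, dotProduct_sub, Finset.sum_sub_distrib, hleft, hright,
    Finset.sum_const, Finset.card_univ]
  abel

variable (κ) in
def classProj : (Σ u, κ u) × m → ι × m := fun p => (p.1.1, p.2)

def classSum [∀ u, Fintype (κ u)] (z : (Σ u, κ u) × m → R) : ι × m → R :=
  fun p => ∑ i, z (⟨p.1, i⟩, p.2)

variable (κ) in
def classSizes [∀ u, Fintype (κ u)] : ι × m → R := fun p => Fintype.card (κ p.1)

def memberMatrix [DecidableEq ι] [∀ u, DecidableEq (κ u)] (K : Matrix (ι × m) (ι × m) R)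
    (A : ι → Matrix m m R) : Matrix ((Σ u, κ u) × m) ((Σ u, κ u) × m) R :=
  K.submatrix (classProj κ) (classProj κ) + comp _ _ _ _ R (diagonal fun a => A a.1)

variable (κ) in
def classMatrix [Fintype ι] [DecidableEq ι] [∀ u, Fintype (κ u)] [Fintype m] [DecidableEq m]
    (K : Matrix (ι × m) (ι × m) R) (A : ι → Matrix m m R) : Matrix (ι × m) (ι × m) R :=
  diagonal (classSizes κ) * K * diagonal (classSizes κ) +
    comp _ _ _ _ R (diagonal fun u => (Fintype.card (κ u) : R) • A u)

theorem memberMatrix_apply [DecidableEq ι] [∀ u, DecidableEq (κ u)]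
    (K : Matrix (ι × m) (ι × m) R) (A : ι → Matrix m m R) (a b : Σ u, κ u) (x y : m) :
    memberMatrix K A (a, x) (b, y) = K (a.1, x) (b.1, y) + if a = b then A a.1 x y else 0 := by
  by_cases hab : a = b
  · subst hab; simp [memberMatrix, classProj]
  · simp [memberMatrix, classProj, hab]

theorem isSymm_memberMatrix [DecidableEq ι] [∀ u, DecidableEq (κ u)]
    {K : Matrix (ι × m) (ι × m) R} {A : ι → Matrix m m R} (hK : K.IsSymm)
    (hA : ∀ u, (A u).IsSymm) : (memberMatrix (κ := κ) K A).IsSymm :=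
  (hK.submatrix _).add (isSymm_comp_diagonal fun a => hA a.1)

variable [Fintype ι] [∀ u, Fintype (κ u)] [Fintype m]

theorem dotProduct_comp_classProj (z : (Σ u, κ u) × m → R) (g : ι × m → R) :
    z ⬝ᵥ (g ∘ classProj κ) = classSum z ⬝ᵥ g := by
  simp only [dotProduct, Fintype.sum_prod_type, Fintype.sum_sigma, classSum,
    Function.comp_apply, Finset.sum_mul]
  exact Finset.sum_congr rfl fun u _ => Finset.sum_comm

theorem submatrix_classProj_mulVec (K : Matrix (ι × m) (ι × m) R) (z : (Σ u, κ u) × m → R) :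
    K.submatrix (classProj κ) (classProj κ) *ᵥ z = (K *ᵥ classSum z) ∘ classProj κ := by
  ext p
  exact (dotProduct_comm _ _).trans ((dotProduct_comp_classProj z _).trans (dotProduct_comm _ _))

theorem dotProduct_submatrix_classProj_mulVec (K : Matrix (ι × m) (ι × m) R)
    (z z' : (Σ u, κ u) × m → R) :
    z ⬝ᵥ K.submatrix (classProj κ) (classProj κ) *ᵥ z' = classSum z ⬝ᵥ K *ᵥ classSum z' := by
  rw [submatrix_classProj_mulVec, dotProduct_comp_classProj]

variable [DecidableEq ι] [DecidableEq m]

theorem classMatrix_apply (K : Matrix (ι × m) (ι × m) R) (A : ι → Matrix m m R)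
    (u v : ι) (x y : m) :
    classMatrix κ K A (u, x) (v, y) = Fintype.card (κ u) * K (u, x) (v, y) * Fintype.card (κ v) +
      if u = v then Fintype.card (κ u) * A u x y else 0 := by
  by_cases huv : u = v
  · subst huv; simp [classMatrix, classSizes]
  · simp [classMatrix, classSizes, huv]

theorem isSymm_classMatrix {K : Matrix (ι × m) (ι × m) R} {A : ι → Matrix m m R}
    (hK : K.IsSymm) (hA : ∀ u, (A u).IsSymm) : (classMatrix κ K A).IsSymm := by
  refine IsSymm.add ?_ (isSymm_comp_diagonal fun u => (hA u).smul _)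
  rw [IsSymm, transpose_mul, transpose_mul, diagonal_transpose, hK.eq, mul_assoc]

variable [∀ u, DecidableEq (κ u)]

theorem dotProduct_memberMatrix_mulVec (K : Matrix (ι × m) (ι × m) R) (A : ι → Matrix m m R)
    (z : (Σ u, κ u) × m → R) (w : ι × m → R) (hw : diagonal (classSizes κ) *ᵥ w = classSum z) :
    z ⬝ᵥ memberMatrix K A *ᵥ z = w ⬝ᵥ classMatrix κ K A *ᵥ w +
      ∑ u, ∑ i, (curry z ⟨u, i⟩ - curry w u) ⬝ᵥ A u *ᵥ (curry z ⟨u, i⟩ - curry w u) := by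
  have hsum : ∀ u, ∑ i, curry z ⟨u, i⟩ = Fintype.card (κ u) • curry w u := fun u => by
    ext x
    simpa [mulVec_diagonal, classSizes, classSum, nsmul_eq_mul, curry] using
      (congrFun hw (u, x)).symm
  have hscaled : w ⬝ᵥ (diagonal (classSizes κ) * K * diagonal (classSizes κ)) *ᵥ w =
      classSum z ⬝ᵥ K *ᵥ classSum z := by
    rw [← mulVec_mulVec, ← mulVec_mulVec, dotProduct_mulVec, ← diagonal_transpose,
      vecMul_transpose, diagonal_transpose, hw]
  simp only [memberMatrix, classMatrix, add_mulVec, dotProduct_add, hscaled,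
    dotProduct_submatrix_classProj_mulVec, dotProduct_comp_diagonal_mulVec, Fintype.sum_sigma,
    smul_mulVec, dotProduct_smul, sum_sub_dotProduct_mulVec_sub _ _ _ (hsum _),
    Finset.sum_sub_distrib, Nat.cast_smul_eq_nsmul]
  abel

end Algebra

section PosSemidef

variable [Fintype ι] [DecidableEq ι] [∀ u, Fintype (κ u)] [∀ u, DecidableEq (κ u)]
  [Fintype m] [DecidableEq m] {K : Matrix (ι × m) (ι × m) ℝ} {A : ι → Matrix m m ℝ}

theorem posSemidef_classMatrix_of_memberMatrix (hK : K.IsSymm) (hA : ∀ u, (A u).IsSymm)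
    (h : (memberMatrix (κ := κ) K A).PosSemidef) : (classMatrix κ K A).PosSemidef := by
  refine .of_dotProduct_mulVec_nonneg (isHermitian_iff_isSymm.mpr (isSymm_classMatrix hK hA))
    fun w => ?_
  have hw : diagonal (classSizes κ) *ᵥ w = classSum (w ∘ classProj κ) := by
    ext p
    simp [mulVec_diagonal, classSizes, classSum, classProj]
  have hdev : ∀ u (i : κ u), curry (w ∘ classProj κ) ⟨u, i⟩ - curry w u = 0 :=
    fun _ _ => sub_eq_zero.mpr rfl
  have := h.dotProduct_mulVec_nonneg (w ∘ classProj κ)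
  rw [star_trivial, dotProduct_memberMatrix_mulVec K A _ w hw] at this
  rw [star_trivial]
  simpa only [hdev, zero_dotProduct, Finset.sum_const_zero, add_zero] using this

theorem posSemidef_of_memberMatrix (hA : ∀ u, (A u).IsSymm)
    (h : (memberMatrix (κ := κ) K A).PosSemidef) {u : ι} {i j : κ u} (hij : i ≠ j) :
    (A u).PosSemidef := by
  refine .of_dotProduct_mulVec_nonneg (isHermitian_iff_isSymm.mpr (hA u)) fun f => ?_
  rw [star_trivial]
  set c : (Σ v, κ v) → ℝ := Pi.single ⟨u, i⟩ 1 - Pi.single ⟨u, j⟩ 1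
  have hne : (⟨u, i⟩ : Σ v, κ v) ≠ ⟨u, j⟩ := by simpa using hij
  have hc : classSum (fun p : (Σ v, κ v) × m => c p.1 * f p.2) = 0 := by
    ext ⟨v, x⟩
    by_cases hv : v = u
    · subst hv
      simp [classSum, c, Pi.single_apply, sub_mul, Finset.sum_sub_distrib]
    · simp [classSum, c, hv]
  have hc2 : ∀ g : (Σ v, κ v) → ℝ, ∑ a, c a * (c a * g a) = g ⟨u, i⟩ + g ⟨u, j⟩ := fun g => by
    rw [Fintype.sum_eq_add _ _ hne fun a ha => by simp [c, ha.1, ha.2]]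
    simp [c, hne, hne.symm]
  have := h.dotProduct_mulVec_nonneg fun p => c p.1 * f p.2
  rw [star_trivial, dotProduct_memberMatrix_mulVec K A _ 0 (by rw [mulVec_zero, hc])] at this
  have hdev : ∀ v (k : κ v), curry (fun p : (Σ v, κ v) × m => c p.1 * f p.2) ⟨v, k⟩ -
      curry (0 : ι × m → ℝ) v = c ⟨v, k⟩ • f := fun _ _ => by ext; simp [curry]
  simp only [hdev, zero_dotProduct, zero_add, mulVec_smul, smul_dotProduct, dotProduct_smul,
    smul_eq_mul] at this
  rw [← Fintype.sum_sigma fun a : (Σ v, κ v) => c a * (c a * (f ⬝ᵥ A a.1 *ᵥ f)), hc2] at this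
  linarith

theorem posSemidef_memberMatrix (hK : K.IsSymm) (hA : ∀ u, (A u).IsSymm)
    (hH : (classMatrix κ K A).PosSemidef) (hApos : ∀ u, Nonempty (κ u) → (A u).PosSemidef) :
    (memberMatrix (κ := κ) K A).PosSemidef := by
  refine .of_dotProduct_mulVec_nonneg (isHermitian_iff_isSymm.mpr (isSymm_memberMatrix hK hA))
    fun z => ?_
  -- For an empty class the size is `0` and `0 / 0 = 0`, but then the class sum vanishes too.
  have hw : diagonal (classSizes κ) *ᵥ (classSum z / classSizes κ) = classSum z := by
    ext ⟨u, x⟩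
    rw [mulVec_diagonal]
    rcases isEmpty_or_nonempty (κ u) with hu | hu
    · simp [classSum]
    · exact mul_div_cancel₀ _ (by simp [classSizes, Fintype.card_ne_zero])
  rw [star_trivial, dotProduct_memberMatrix_mulVec K A z _ hw]
  refine add_nonneg (by simpa using hH.dotProduct_mulVec_nonneg _)
    (Finset.sum_nonneg fun u _ => Finset.sum_nonneg fun i _ => ?_)
  simpa only [star_trivial] using (hApos u ⟨i⟩).dotProduct_mulVec_nonneg _

end PosSemidef

end ClassBlock

open ClassBlock

theorem stmt_13_general (U p : ℕ) (nv : Fin U → ℕ)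
    (Ga Gb : Fin U → Matrix (Fin p) (Fin p) ℝ)
    (Gc : Fin U → Fin U → Matrix (Fin p) (Fin p) ℝ)
    (hGa : ∀ u, (Ga u).IsSymm) (hGb : ∀ u, (Gb u).IsSymm)
    (hGb1 : ∀ u, nv u = 1 → Gb u = 0)
    (hGc : ∀ u v, Gc v u = (Gc u v)ᵀ)
    (Gs : Matrix ((Σ u : Fin U, Fin (nv u)) × Fin p) ((Σ u : Fin U, Fin (nv u)) × Fin p) ℝ)
    (hdiag : ∀ (u : Fin U) (i j : Fin (nv u)) (x y : Fin p),
      Gs (⟨u, i⟩, x) (⟨u, j⟩, y) = if i = j then Ga u x y else Gb u x y)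
    (hoff : ∀ (u v : Fin U), u ≠ v → ∀ (i : Fin (nv u)) (j : Fin (nv v)) (x y : Fin p),
      Gs (⟨u, i⟩, x) (⟨v, j⟩, y) = Gc u v x y)
    (H : Matrix (Fin U × Fin p) (Fin U × Fin p) ℝ)
    (hH : ∀ u v x y, H (u, x) (v, y) =
      if u = v then (nv u : ℝ) * Ga u x y + (nv u : ℝ) * ((nv u : ℝ) - 1) * Gb u x y
      else (nv u : ℝ) * (nv v : ℝ) * Gc u v x y) :
    Gs.PosSemidef ↔
      H.PosSemidef ∧ (∀ u, 2 ≤ nv u → (Ga u - Gb u).PosSemidef) ∧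
        (∀ u, nv u = 1 → (Ga u).PosSemidef) := by
  set K := crossMemberMatrix Gb Gc
  have hK : K.IsSymm := isSymm_crossMemberMatrix hGb hGc
  have hA : ∀ u, (Ga u - Gb u).IsSymm := fun u => (hGa u).sub (hGb u)
  have hGs_eq : Gs = memberMatrix K fun u => Ga u - Gb u := by
    ext ⟨⟨u, i⟩, x⟩ ⟨⟨v, j⟩, y⟩
    rw [memberMatrix_apply]
    by_cases huv : u = v
    · subst huv
      by_cases hij : i = j <;> simp [hdiag, K, crossMemberMatrix, hij]
    · simp [hoff u v huv, K, crossMemberMatrix, huv]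
  have hH_eq : H = classMatrix (fun u => Fin (nv u)) K fun u => Ga u - Gb u := by
    ext ⟨u, x⟩ ⟨v, y⟩
    rw [hH, classMatrix_apply]
    by_cases huv : u = v
    · subst huv
      simp only [K, crossMemberMatrix, of_apply, Matrix.sub_apply, Fintype.card_fin, if_true]
      ring
    · simp only [K, crossMemberMatrix, of_apply, Fintype.card_fin, huv, if_false, add_zero]
      ring
  have hsingle (h : Gs.PosSemidef) (u : Fin U) (hu : nv u = 1) : (Ga u).PosSemidef := by
    convert h.submatrix fun x => ((⟨u, ⟨0, by omega⟩⟩ : Σ u, Fin (nv u)), x)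
    ext x y
    simp [hdiag]
  subst hGs_eq hH_eq
  refine ⟨fun h => ⟨posSemidef_classMatrix_of_memberMatrix hK hA h, fun u hu => ?_, hsingle h⟩,
    fun ⟨hHpsd, h2, h1⟩ => posSemidef_memberMatrix hK hA hHpsd fun u ⟨i⟩ => ?_⟩
  · exact posSemidef_of_memberMatrix hA h (i := ⟨0, by omega⟩) (j := ⟨1, by omega⟩) (by simp)
  · rcases (show nv u = 1 ∨ 2 ≤ nv u by have := i.pos; omega) with hu | hu
    · simpa [hGb1 u hu] using h1 u hu
    · exact h2 u hu

theorem stmt_13 (U p : ℕ) (nv : Fin U → ℕ) (hnv : ∀ u, 1 ≤ nv u)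
    (Ga Gb : Fin U → Matrix (Fin p) (Fin p) ℝ)
    (Gc : Fin U → Fin U → Matrix (Fin p) (Fin p) ℝ)
    (hGa : ∀ u, (Ga u).IsSymm) (hGb : ∀ u, (Gb u).IsSymm)
    (hGb1 : ∀ u, nv u = 1 → Gb u = 0)
    (hGc : ∀ u v, Gc v u = (Gc u v)ᵀ)
    (Gs : Matrix ((Σ u : Fin U, Fin (nv u)) × Fin p) ((Σ u : Fin U, Fin (nv u)) × Fin p) ℝ)
    (hdiag : ∀ (u : Fin U) (i j : Fin (nv u)) (x y : Fin p),
      Gs (⟨u, i⟩, x) (⟨u, j⟩, y) = if i = j then Ga u x y else Gb u x y)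
    (hoff : ∀ (u v : Fin U), u ≠ v → ∀ (i : Fin (nv u)) (j : Fin (nv v)) (x y : Fin p),
      Gs (⟨u, i⟩, x) (⟨v, j⟩, y) = Gc u v x y)
    (H : Matrix (Fin U × Fin p) (Fin U × Fin p) ℝ)
    (hH : ∀ u v x y, H (u, x) (v, y) =
      if u = v then (nv u : ℝ) * Ga u x y + (nv u : ℝ) * ((nv u : ℝ) - 1) * Gb u x y
      else (nv u : ℝ) * (nv v : ℝ) * Gc u v x y) :
    Gs.PosSemidef ↔
      H.PosSemidef ∧ (∀ u, 2 ≤ nv u → (Ga u - Gb u).PosSemidef) ∧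
        (∀ u, nv u = 1 → (Ga u).PosSemidef) :=
  stmt_13_general U p nv Ga Gb Gc hGa hGb hGb1 hGc Gs hdiag hoff H hH
end

section
/- Let z ∈ ℝ^{np} be partitioned into blocks z₁,…,z_n ∈ ℝᵖ, with z̄ = (1/n)∑ᵢ zᵢ and ẑᵢ = zᵢ − z̄. Let G^s = I_n ⊗ (Gᵃ − Gᵇ) + 𝟏_n𝟏_nᵀ ⊗ Gᵇ for symmetric Gᵃ, Gᵇ ∈ ℝ^{p×p}. Then zᵀG^s z = z̄ᵀ(nGᵃ + n(n−1)Gᵇ)z̄ + ∑ᵢ ẑᵢᵀ(Gᵃ − Gᵇ)ẑᵢ. -/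
/-!
The quadratic form of `C ⊗ₖ A` pairs the blocks `zᵢ` through `C`: for `C = 1` it is
`∑ᵢ zᵢᵀ A zᵢ`, for the all-ones matrix it is `sᵀ A s` with `s = ∑ᵢ zᵢ = n z̄`. Writing
`zᵢ = ẑᵢ + z̄`, the cross terms vanish because `∑ᵢ ẑᵢ = 0`, which leaves
`∑ᵢ zᵢᵀ A zᵢ = ∑ᵢ ẑᵢᵀ A ẑᵢ + n z̄ᵀ A z̄`. Collecting the `z̄` terms gives the matrix
`n (Gᵃ - Gᵇ) + n² Gᵇ`.
-/

open Matrix Kronecker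

theorem dotProduct_kronecker_mulVec {R ι κ : Type*} [CommSemiring R] [Fintype ι] [Fintype κ]
    (C : Matrix ι ι R) (A : Matrix κ κ R) (z : ι × κ → R) :
    z ⬝ᵥ ((C ⊗ₖ A) *ᵥ z) = ∑ i, ∑ j, C i j * (Function.curry z i ⬝ᵥ A *ᵥ Function.curry z j) := by
  simp only [dotProduct, mulVec, Fintype.sum_prod_type, kroneckerMap_apply, Finset.mul_sum,
    Function.curry_apply]
  rw [Finset.sum_congr rfl fun i _ => Finset.sum_comm]
  refine Finset.sum_congr rfl fun i _ => Finset.sum_congr rfl fun j _ =>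
    Finset.sum_congr rfl fun x _ => Finset.sum_congr rfl fun y _ => by ring

theorem dotProduct_one_kronecker_mulVec {R ι κ : Type*} [CommSemiring R] [Fintype ι]
    [DecidableEq ι] [Fintype κ] (A : Matrix κ κ R) (z : ι × κ → R) :
    z ⬝ᵥ (((1 : Matrix ι ι R) ⊗ₖ A) *ᵥ z) =
      ∑ i, Function.curry z i ⬝ᵥ A *ᵥ Function.curry z i := by
  simp [dotProduct_kronecker_mulVec, one_apply]

theorem dotProduct_allOnes_kronecker_mulVec {R ι κ : Type*} [CommSemiring R] [Fintype ι]
    [Fintype κ] (A : Matrix κ κ R) (z : ι × κ → R) :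
    z ⬝ᵥ ((Matrix.of (fun _ _ : ι => (1 : R)) ⊗ₖ A) *ᵥ z) =
      (∑ i, Function.curry z i) ⬝ᵥ A *ᵥ ∑ i, Function.curry z i := by
  simp only [dotProduct_kronecker_mulVec, of_apply, one_mul, mulVec_sum, dotProduct_sum,
    sum_dotProduct]
  exact Finset.sum_comm

-- No hypothesis on the cardinality: for empty `ι` both sides are `0`, despite `0⁻¹ = 0`.
theorem sum_eq_card_smul_inv_card_smul_sum {K ι V : Type*} [DivisionSemiring K] [CharZero K]
    [Fintype ι] [AddCommMonoid V] [Module K V] (w : ι → V) :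
    ∑ i, w i = (Fintype.card ι : K) • (Fintype.card ι : K)⁻¹ • ∑ i, w i := by
  cases isEmpty_or_nonempty ι
  · simp
  · rw [smul_inv_smul₀ (Nat.cast_ne_zero.mpr Fintype.card_ne_zero)]

theorem sum_dotProduct_mulVec_self_eq_centered {R ι κ : Type*} [CommRing R] [Fintype ι]
    [Fintype κ] (A : Matrix κ κ R) (w : ι → κ → R) (m : κ → R)
    (hm : ∑ i, w i = (Fintype.card ι : R) • m) :
    ∑ i, w i ⬝ᵥ A *ᵥ w i =
      ∑ i, (w i - m) ⬝ᵥ A *ᵥ (w i - m) + (Fintype.card ι : R) * (m ⬝ᵥ A *ᵥ m) := by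
  have hsum : ∑ i, (w i - m) = 0 := by
    simp [Finset.sum_sub_distrib, hm, Nat.cast_smul_eq_nsmul]
  have hcross : ∑ i, ((w i - m) ⬝ᵥ A *ᵥ m + m ⬝ᵥ A *ᵥ (w i - m)) = 0 := by
    rw [Finset.sum_add_distrib, ← sum_dotProduct, ← dotProduct_sum, ← mulVec_sum, hsum]
    simp
  calc ∑ i, w i ⬝ᵥ A *ᵥ w i
      = ∑ i, ((w i - m) ⬝ᵥ A *ᵥ (w i - m) + ((w i - m) ⬝ᵥ A *ᵥ m + m ⬝ᵥ A *ᵥ (w i - m))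
          + m ⬝ᵥ A *ᵥ m) := by
        refine Finset.sum_congr rfl fun i _ => ?_
        simp only [mulVec_sub, dotProduct_sub, sub_dotProduct]
        ring
    _ = _ := by
        rw [Finset.sum_add_distrib, Finset.sum_add_distrib, hcross, Finset.sum_const,
          Finset.card_univ, nsmul_eq_mul, add_zero]

theorem stmt_16_general (n p : ℕ) (Ga Gb : Matrix (Fin p) (Fin p) ℝ) (z : Fin n × Fin p → ℝ) :
    z ⬝ᵥ (((1 : Matrix (Fin n) (Fin n) ℝ) ⊗ₖ (Ga - Gb) +
        (Matrix.of fun _ _ : Fin n => (1 : ℝ)) ⊗ₖ Gb).mulVec z) =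
      (fun x => (n : ℝ)⁻¹ * ∑ i, z (i, x)) ⬝ᵥ
        (((n : ℝ) • Ga + ((n : ℝ) * ((n : ℝ) - 1)) • Gb).mulVec
          (fun x => (n : ℝ)⁻¹ * ∑ i, z (i, x))) +
      ∑ i, (fun x => z (i, x) - (n : ℝ)⁻¹ * ∑ k, z (k, x)) ⬝ᵥ
        ((Ga - Gb).mulVec (fun x => z (i, x) - (n : ℝ)⁻¹ * ∑ k, z (k, x))) := by
  set w := Function.curry z
  set m : Fin p → ℝ := (n : ℝ)⁻¹ • ∑ i, w i
  have hmean : (fun x => (n : ℝ)⁻¹ * ∑ i, z (i, x)) = m := by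
    ext x; simp [m, w, Finset.sum_apply]
  have hcentered : ∀ i, (fun x => z (i, x) - (n : ℝ)⁻¹ * ∑ k, z (k, x)) = w i - m := by
    intro i; ext x; simp [m, w, Finset.sum_apply]
  have hsum : ∑ i, w i = (n : ℝ) • m := by
    simpa using sum_eq_card_smul_inv_card_smul_sum (K := ℝ) w
  rw [add_mulVec, dotProduct_add, dotProduct_one_kronecker_mulVec,
    dotProduct_allOnes_kronecker_mulVec, sum_dotProduct_mulVec_self_eq_centered _ _ m
      (by simpa using hsum), hsum, hmean]
  have hmean_form : m ⬝ᵥ ((n : ℝ) • Ga + ((n : ℝ) * ((n : ℝ) - 1)) • Gb) *ᵥ m =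
      (n : ℝ) * (m ⬝ᵥ (Ga - Gb) *ᵥ m) + ((n : ℝ) • m) ⬝ᵥ Gb *ᵥ ((n : ℝ) • m) := by
    simp only [add_mulVec, sub_mulVec, smul_mulVec, mulVec_smul, dotProduct_add, dotProduct_sub,
      dotProduct_smul, smul_dotProduct, smul_eq_mul]
    ring
  simp only [hcentered, Fintype.card_fin, hmean_form]
  ring

theorem stmt_16 (n p : ℕ) (hn : 0 < n) (Ga Gb : Matrix (Fin p) (Fin p) ℝ)
    (hGa : Ga.IsSymm) (hGb : Gb.IsSymm) (z : Fin n × Fin p → ℝ) :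
    z ⬝ᵥ (((1 : Matrix (Fin n) (Fin n) ℝ) ⊗ₖ (Ga - Gb) +
        (Matrix.of fun _ _ : Fin n => (1 : ℝ)) ⊗ₖ Gb).mulVec z) =
      (fun x => (n : ℝ)⁻¹ * ∑ i, z (i, x)) ⬝ᵥ
        (((n : ℝ) • Ga + ((n : ℝ) * ((n : ℝ) - 1)) • Gb).mulVec
          (fun x => (n : ℝ)⁻¹ * ∑ i, z (i, x))) +
      ∑ i, (fun x => z (i, x) - (n : ℝ)⁻¹ * ∑ k, z (k, x)) ⬝ᵥ
        ((Ga - Gb).mulVec (fun x => z (i, x) - (n : ℝ)⁻¹ * ∑ k, z (k, x))) :=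
  stmt_16_general n p Ga Gb z
end
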